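/- arXiv:2512.00230 — 5 statements merged into one kernel-verified Lean document; each statement's English description precedes it below -/
import Mathlib

section
/- Let I be an ideal on ω such that P(ω)/I is ccc. Then P(ω)/I is a complete Boolean algebra; concretely: for every family (A_j)_{j ∈ J} of subsets of ω there exists C ⊆ ω such that A_j \ C ∈ I for all j ∈ J, and whenever D ⊆ ω satisfies A_j \ D ∈ I for all j ∈ J, then C \ D ∈ I. -/
noncomputable section

/-- `I` is a proper ideal on `ω` containing all finite sets. -/
def IsIdealOmega (I : Set (Set ℕ)) : Prop :=
  (∀ ⦃A B : Set ℕ⦄, A ∈ I → B ⊆ A → B ∈ I) ∧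
  (∀ ⦃A B : Set ℕ⦄, A ∈ I → B ∈ I → A ∪ B ∈ I) ∧
  (∀ A : Set ℕ, A.Finite → A ∈ I) ∧
  (Set.univ : Set ℕ) ∉ I

/-- `P(ω)/I` is ccc: every family of `I`-positive sets whose pairwise intersections
lie in `I` is countable. -/
def QuotientCCC (I : Set (Set ℕ)) : Prop :=
  ∀ 𝒜 : Set (Set ℕ), (∀ A ∈ 𝒜, A ∉ I) →
    (∀ A ∈ 𝒜, ∀ B ∈ 𝒜, A ≠ B → A ∩ B ∈ I) → 𝒜.Countable

/-- If `P(ω)/I` is ccc then `P(ω)/I` is a complete Boolean algebra: every family of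
subsets of `ω` has a least upper bound modulo `I`. -/
theorem complete_of_ccc (I : Set (Set ℕ)) (hI : IsIdealOmega I) (hccc : QuotientCCC I) :
    ∀ {J : Type*} (A : J → Set ℕ), ∃ C : Set ℕ,
      (∀ j, A j \ C ∈ I) ∧ ∀ D : Set ℕ, (∀ j, A j \ D ∈ I) → C \ D ∈ I := by
  obtain ⟨hmono, hunion, hfin, huniv⟩ := hI
  have hempty : (∅ : Set ℕ) ∈ I := hfin ∅ Set.finite_empty
  -- finite unions lemma
  have hfinU : ∀ (n : ℕ) (g : ℕ → Set ℕ), (∀ j, j < n → g j ∈ I) →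
      {x : ℕ | ∃ j, j < n ∧ x ∈ g j} ∈ I := by
    intro n
    induction n with
    | zero =>
      intro g _
      have h : {x : ℕ | ∃ j, j < 0 ∧ x ∈ g j} = ∅ := by
        ext x; simp
      rw [h]; exact hempty
    | succ n ih =>
      intro g hg
      have h1 : {x : ℕ | ∃ j, j < n ∧ x ∈ g j} ∈ I :=
        ih g (fun j hj => hg j (hj.trans (Nat.lt_succ_self n)))
      have h2 : g n ∈ I := hg n (Nat.lt_succ_self n)
      refine hmono (hunion h1 h2) ?_
      intro x hx
      obtain ⟨j, hjn, hxg⟩ := hx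
      rcases Nat.lt_succ_iff_lt_or_eq.mp hjn with h | h
      · exact Or.inl ⟨j, h, hxg⟩
      · exact Or.inr (h ▸ hxg)
  intro J A
  -- the dense set S
  set S : Set (Set ℕ) := {X | X ∉ I ∧ ((∃ j, X ⊆ A j) ∨ ∀ j, X ∩ A j ∈ I)} with hSdef
  -- maximal antichain inside S
  obtain ⟨ℳ, hℳ⟩ := zorn_subset
      {T : Set (Set ℕ) | T ⊆ S ∧ ∀ X ∈ T, ∀ Y ∈ T, X ≠ Y → X ∩ Y ∈ I}
      (by
        intro c hc hchain
        refine ⟨⋃₀ c, ⟨?_, ?_⟩, fun s hs => Set.subset_sUnion_of_mem hs⟩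
        · intro X hX
          obtain ⟨t, htc, hXt⟩ := hX
          exact (hc htc).1 hXt
        · intro X hX Y hY hXY
          obtain ⟨t1, ht1, hXt⟩ := hX
          obtain ⟨t2, ht2, hYt⟩ := hY
          rcases hchain.total ht1 ht2 with h | h
          · exact (hc ht2).2 X (h hXt) Y hYt hXY
          · exact (hc ht1).2 X hXt Y (h hYt) hXY)
  have hℳS : ℳ ⊆ S := hℳ.1.1
  have hℳac : ∀ X ∈ ℳ, ∀ Y ∈ ℳ, X ≠ Y → X ∩ Y ∈ I := hℳ.1.2
  -- maximality over all positive sets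
  have hmax : ∀ Y : Set ℕ, Y ∉ I → ∃ M ∈ ℳ, Y ∩ M ∉ I := by
    intro Y hY
    by_contra hcon
    push_neg at hcon
    -- find Y' ⊆ Y with Y' ∈ S
    obtain ⟨Y', hY'sub, hY'S⟩ : ∃ Y' : Set ℕ, Y' ⊆ Y ∧ Y' ∈ S := by
      by_cases hc : ∃ j, Y ∩ A j ∉ I
      · obtain ⟨j, hj⟩ := hc
        exact ⟨Y ∩ A j, Set.inter_subset_left,
          ⟨hj, Or.inl ⟨j, Set.inter_subset_right⟩⟩⟩
      · push_neg at hc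
        exact ⟨Y, subset_rfl, ⟨hY, Or.inr hc⟩⟩
    have hY'I : Y' ∉ I := hY'S.1
    have hY'notℳ : Y' ∉ ℳ := by
      intro hmem
      exact hY'I (hmono (hcon Y' hmem) (Set.subset_inter hY'sub subset_rfl))
    have hins : insert Y' ℳ ∈
        {T : Set (Set ℕ) | T ⊆ S ∧ ∀ X ∈ T, ∀ Y ∈ T, X ≠ Y → X ∩ Y ∈ I} := by
      constructor
      · intro X hX
        rcases hX with h | h
        · exact h ▸ hY'S
        · exact hℳS h
      · intro X hX Z hZ hXZ
        rcases hX with hX | hX <;> rcases hZ with hZ | hZ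
        · exact absurd (hX.trans hZ.symm) hXZ
        · subst hX
          exact hmono (hcon Z hZ) (fun x hx => ⟨hY'sub hx.1, hx.2⟩)
        · subst hZ
          exact hmono (hcon X hX) (fun x hx => ⟨hY'sub hx.2, hx.1⟩)
        · exact hℳac X hX Z hZ hXZ
    have := hℳ.2 hins (Set.subset_insert _ _)
    exact hY'notℳ (this (Set.mem_insert _ _))
  -- ℳ is countable and nonempty
  have hcnt : ℳ.Countable := hccc ℳ (fun X hX => (hℳS hX).1) hℳac
  obtain ⟨M0, hM0, _⟩ := hmax Set.univ huniv
  obtain ⟨f, hf⟩ := Set.Countable.exists_eq_range hcnt ⟨M0, hM0⟩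
  have hfmem : ∀ k, f k ∈ ℳ := by
    intro k; rw [hf]; exact Set.mem_range_self k
  have hfI : ∀ k, f k ∉ I := fun k => (hℳS (hfmem k)).1
  have hfS : ∀ k, (∃ j, f k ⊆ A j) ∨ ∀ j, f k ∩ A j ∈ I := fun k => (hℳS (hfmem k)).2
  have hpair : ∀ i k, f i ≠ f k → f i ∩ f k ∈ I :=
    fun i k h => hℳac (f i) (hfmem i) (f k) (hfmem k) h
  -- indices whose set lies under some A j
  set K : Set ℕ := {k | ∃ j, f k ⊆ A j} with hKdef
  -- disjointified pieces
  set M' : ℕ → Set ℕ := fun k => {x | x ∈ f k ∧ ∀ i, i < k → f i ≠ f k → x ∉ f i} with hM'def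
  have hM'sub : ∀ k, M' k ⊆ f k := fun k x hx => hx.1
  set C : Set ℕ := {x | ∃ k, k ∈ K ∧ x ∈ M' k} with hCdef
  -- (a) f k \ M' k ∈ I
  have hdiff : ∀ k, f k \ M' k ∈ I := by
    intro k
    refine hmono (hfinU k (fun i => {x | f i ≠ f k ∧ x ∈ f i ∩ f k}) ?_) ?_
    · intro i _
      by_cases h : f i ≠ f k
      · exact hmono (hpair i k h) (fun x hx => hx.2)
      · exact hmono hempty (fun x hx => absurd hx.1 h)
    · intro x hx
      obtain ⟨hxfk, hxnM⟩ := hx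
      have : ¬ ∀ i, i < k → f i ≠ f k → x ∉ f i := fun h => hxnM ⟨hxfk, h⟩
      push_neg at this
      obtain ⟨i, hik, hne, hxfi⟩ := this
      exact ⟨i, hik, ⟨hne, hxfi, hxfk⟩⟩
  -- (b) for k ∉ K, C ∩ f k ∈ I
  have hCk : ∀ k, k ∉ K → C ∩ f k ∈ I := by
    intro k hk
    refine hmono (hfinU k (fun i => {x | f i ≠ f k ∧ x ∈ f i ∩ f k}) ?_) ?_
    · intro i _
      by_cases h : f i ≠ f k
      · exact hmono (hpair i k h) (fun x hx => hx.2)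
      · exact hmono hempty (fun x hx => absurd hx.1 h)
    · intro x hx
      obtain ⟨⟨i, hiK, hxM'⟩, hxfk⟩ := hx
      have hne : f i ≠ f k := by
        intro heq
        exact hk (by rw [hKdef]; obtain ⟨j, hj⟩ := hiK; exact ⟨j, heq ▸ hj⟩)
      have hik : i < k := by
        rcases lt_trichotomy i k with h | h | h
        · exact h
        · exact absurd rfl (h ▸ hne)
        · exact absurd hxfk (hxM'.2 k h hne.symm)
      exact ⟨i, hik, ⟨hne, hxM'.1, hxfk⟩⟩
  refine ⟨C, ?_, ?_⟩
  · -- A j \ C ∈ I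
    intro j
    by_contra hX
    obtain ⟨M, hMℳ, hXM⟩ := hmax (A j \ C) hX
    rw [hf] at hMℳ
    obtain ⟨k, rfl⟩ := hMℳ
    apply hXM
    by_cases hk : k ∈ K
    · refine hmono (hdiff k) ?_
      intro x hx
      obtain ⟨⟨hxA, hxC⟩, hxfk⟩ := hx
      exact ⟨hxfk, fun hxM' => hxC ⟨k, hk, hxM'⟩⟩
    · have hkind : ∀ j, f k ∩ A j ∈ I := (hfS k).resolve_left hk
      refine hmono (hkind j) ?_
      intro x hx
      exact ⟨hx.2, hx.1.1⟩
  · -- minimality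
    intro D hD
    by_contra hX
    obtain ⟨M, hMℳ, hXM⟩ := hmax (C \ D) hX
    rw [hf] at hMℳ
    obtain ⟨k, rfl⟩ := hMℳ
    apply hXM
    by_cases hk : k ∈ K
    · obtain ⟨j, hj⟩ := hk
      refine hmono (hunion (hdiff k) (hD j)) ?_
      intro x hx
      obtain ⟨⟨hxC, hxD⟩, hxfk⟩ := hx
      by_cases hx' : x ∈ M' k
      · exact Or.inr ⟨hj (hM'sub k hx'), hxD⟩
      · exact Or.inl ⟨hxfk, hx'⟩
    · refine hmono (hCk k hk) ?_
      intro x hx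
      exact ⟨hx.1.1, hx.2⟩

end
end

section
/- Let (A_n)_{n ∈ ω} and (B_n)_{n ∈ ω} be sequences of subsets of ω such that A_n ∩ B_m is finite for all n, m ∈ ω. Then there exists C ⊆ ω such that A_n \ C is finite and B_m ∩ C is finite for all n, m ∈ ω (i.e., there are no (ω,ω)-gaps in P(ω) modulo finite: any two countable families that are pairwise almost disjoint from each other can be separated). -/
/-- There are no `(ω,ω)`-gaps in `P(ω)` modulo finite: two countable families that are
pairwise almost disjoint from each other can be separated. -/
theorem no_omega_omega_gaps (A B : ℕ → Set ℕ)
    (h : ∀ n m : ℕ, (A n ∩ B m).Finite) :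
    ∃ C : Set ℕ, (∀ n, (A n \ C).Finite) ∧ ∀ m, (B m ∩ C).Finite := by
  refine ⟨⋃ n, (A n \ ⋃ k ∈ Finset.range (n + 1), B k), ?_, ?_⟩
  · intro n
    have hsub : A n \ (⋃ i, (A i \ ⋃ k ∈ Finset.range (i + 1), B k)) ⊆
        ⋃ k ∈ Finset.range (n + 1), A n ∩ B k := by
      intro x hx
      obtain ⟨hxA, hxC⟩ := hx
      have hn : x ∉ A n \ ⋃ k ∈ Finset.range (n + 1), B k := fun hc =>
        hxC (Set.mem_iUnion.mpr ⟨n, hc⟩)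
      simp only [Set.mem_diff, not_and, not_not] at hn
      obtain ⟨k, hk, hxB⟩ := Set.mem_iUnion₂.mp (hn hxA)
      exact Set.mem_iUnion₂.mpr ⟨k, hk, hxA, hxB⟩
    exact (Set.Finite.biUnion (Finset.range (n + 1)).finite_toSet
      (fun k _ => h n k)).subset hsub
  · intro m
    have hsub : B m ∩ (⋃ i, (A i \ ⋃ k ∈ Finset.range (i + 1), B k)) ⊆
        ⋃ i ∈ Finset.range m, A i ∩ B m := by
      intro x hx
      obtain ⟨hxB, hxC⟩ := hx
      obtain ⟨i, hxA, hxnot⟩ := Set.mem_iUnion.mp hxC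
      have him : i < m := by
        by_contra hge
        exact hxnot (Set.mem_iUnion₂.mpr ⟨m, Finset.mem_range.mpr
          (Nat.lt_succ_of_le (le_of_not_gt hge)), hxB⟩)
      exact Set.mem_iUnion₂.mpr ⟨i, Finset.mem_range.mpr him, hxA, hxB⟩
    exact (Set.Finite.biUnion (Finset.range m).finite_toSet
      (fun i _ => h i m)).subset hsub
end

section
/- Let I be an ideal on ω such that c_{0,I} is complemented in ℓ∞. Then P(ω)/I admits a strictly positive finitely additive measure; concretely, there is a function μ : P(ω) → [0,∞) with μ(ω) = 1, μ(A) = μ(B) whenever the symmetric difference A Δ B belongs to I, μ(A ∪ B) = μ(A) + μ(B) whenever A ∩ B ∈ I, and μ(A) > 0 if and only if A ∉ I. -/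
open Filter Topology

noncomputable section

abbrev LinfNat := lp (fun _ : ℕ => ℝ) ⊤

/-- The set `c_{0,I}` of bounded sequences `I`-converging to `0`. -/
def c0Set (I : Set (Set ℕ)) : Set LinfNat :=
  {x | ∀ ε : ℝ, 0 < ε → {n : ℕ | ε ≤ |x n|} ∈ I}

/-- `c_{0,I}` is complemented in `ℓ∞`: there is a bounded linear projection onto it. -/
def c0Complemented (I : Set (Set ℕ)) : Prop :=
  ∃ P : LinfNat →L[ℝ] LinfNat, (∀ x, P (P x) = P x) ∧ Set.range P = c0Set I

/-- The compact space `K_I` of ultrafilters extending the dual filter of `I`. -/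
def KI (I : Set (Set ℕ)) : Set (Ultrafilter ℕ) := {U | ∀ A ∈ I, Aᶜ ∈ U}

theorem KI_isClosed (I : Set (Set ℕ)) : IsClosed (KI I) := by
  have h : KI I = ⋂ A ∈ I, {U : Ultrafilter ℕ | Aᶜ ∈ U} := by
    ext U; simp [KI]
  rw [h]
  exact isClosed_biInter fun A _ => ultrafilter_isClosed_basic _

instance KI.compactSpace (I : Set (Set ℕ)) : CompactSpace (KI I) :=
  isCompact_iff_compactSpace.mp ((KI_isClosed I).isCompact)

/-- A compact space is approximable when the closed unit ball of the dual of `C(K)`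
is weak*-separable. -/
def Approximable (K : Type*) [TopologicalSpace K] [CompactSpace K] : Prop :=
  TopologicalSpace.IsSeparable
    (StrongDual.toWeakDual ''
      Metric.closedBall (0 : StrongDual ℝ C(K, ℝ)) 1)

end

/-!
If `P` is a bounded projection of `ℓ∞` onto `c_{0,I}`, then `T = 1 - P` kills exactly the
indicators of the sets in `I`. Each coordinate `A ↦ T(1_A)(n)` is a bounded finitely additive
signed measure on `P(ω)`; its total variation `ν_n` is a positive one, and `ν_n(A) = 0` iff the
coordinate vanishes on all subsets of `A`. The normalised sum `∑ 2⁻ⁿ ν_n` therefore vanishes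
exactly on `I`.
-/

open Set

noncomputable section

section FinitelyAdditive

variable {α : Type*}

def IsFinitelyAdditive (f : Set α → ℝ) : Prop :=
  ∀ ⦃A B : Set α⦄, Disjoint A B → f (A ∪ B) = f A + f B

variable {f g : Set α → ℝ} {A B : Set α} {C c : ℝ}

namespace IsFinitelyAdditive

lemma map_empty (hf : IsFinitelyAdditive f) : f ∅ = 0 := by
  have := hf (disjoint_empty (∅ : Set α))
  rw [union_self] at this
  linarith

lemma add (hf : IsFinitelyAdditive f) (hg : IsFinitelyAdditive g) :
    IsFinitelyAdditive (f + g) := fun A B hAB => by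
  simp only [Pi.add_apply, hf hAB, hg hAB]
  ring

lemma neg (hf : IsFinitelyAdditive f) : IsFinitelyAdditive (-f) := fun A B hAB => by
  simp only [Pi.neg_apply, hf hAB, neg_add]

lemma inter_add_diff (hf : IsFinitelyAdditive f) (A B : Set α) :
    f (A ∩ B) + f (A \ B) = f A := by
  rw [← hf (disjoint_sdiff_inter.symm), inter_union_sdiff]

lemma eq_of_diff_eq_zero (hf : IsFinitelyAdditive f) (hAB : f (A \ B) = 0)
    (hBA : f (B \ A) = 0) : f A = f B := by
  rw [← hf.inter_add_diff A B, ← hf.inter_add_diff B A, hAB, hBA, inter_comm]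

lemma union_of_inter_eq_zero (hf : IsFinitelyAdditive f) (hAB : f (A ∩ B) = 0) :
    f (A ∪ B) = f A + f B := by
  rw [← sdiff_union_self, hf disjoint_sdiff_left, ← hf.inter_add_diff A B, hAB, zero_add]

end IsFinitelyAdditive

lemma bddAbove_range_of_abs_le (hC : ∀ B, |f B| ≤ C) : BddAbove (range f) :=
  ⟨C, forall_mem_range.2 fun B => (le_abs_self _).trans (hC B)⟩

lemma bddAbove_range_neg_of_abs_le (hC : ∀ B, |f B| ≤ C) : BddAbove (range (-f)) :=
  bddAbove_range_of_abs_le (f := -f) (by simpa only [Pi.neg_apply, abs_neg] using hC)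

def posVariation (f : Set α → ℝ) (A : Set α) : ℝ := sSup (f '' Iic A)

lemma le_posVariation (hf : BddAbove (range f)) (h : B ⊆ A) : f B ≤ posVariation f A :=
  le_csSup (hf.mono (image_subset_range _ _)) (mem_image_of_mem f h)

lemma posVariation_le (h : ∀ B ⊆ A, f B ≤ c) : posVariation f A ≤ c :=
  csSup_le (image_nonempty.2 nonempty_Iic) (forall_mem_image.2 h)

lemma posVariation_nonneg (hf : BddAbove (range f)) (h0 : f ∅ = 0) (A : Set α) :
    0 ≤ posVariation f A :=
  h0 ▸ le_posVariation hf (empty_subset A)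

lemma isFinitelyAdditive_posVariation (hf : IsFinitelyAdditive f) (hb : BddAbove (range f)) :
    IsFinitelyAdditive (posVariation f) := by
  intro A B hAB
  apply le_antisymm
  · refine posVariation_le fun D hD => ?_
    have hsplit : D ∩ A ∪ D ∩ B = D := by rw [← inter_union_distrib_left, inter_eq_left.2 hD]
    rw [← hsplit, hf (hAB.mono inter_subset_right inter_subset_right)]
    exact add_le_add (le_posVariation hb inter_subset_right)
      (le_posVariation hb inter_subset_right)
  · suffices posVariation f A ≤ posVariation f (A ∪ B) - posVariation f B by linarith
    refine posVariation_le fun D hD => ?_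
    suffices posVariation f B ≤ posVariation f (A ∪ B) - f D by linarith
    refine posVariation_le fun E hE => ?_
    have := le_posVariation hb (union_subset_union hD hE)
    rw [hf (hAB.mono hD hE)] at this
    linarith

def totalVariation (f : Set α → ℝ) : Set α → ℝ := posVariation f + posVariation (-f)

lemma isFinitelyAdditive_totalVariation (hf : IsFinitelyAdditive f) (hC : ∀ B, |f B| ≤ C) :
    IsFinitelyAdditive (totalVariation f) :=
  (isFinitelyAdditive_posVariation hf (bddAbove_range_of_abs_le hC)).add
    (isFinitelyAdditive_posVariation hf.neg (bddAbove_range_neg_of_abs_le hC))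

lemma totalVariation_nonneg (hf : IsFinitelyAdditive f) (hC : ∀ B, |f B| ≤ C) (A : Set α) :
    0 ≤ totalVariation f A :=
  add_nonneg (posVariation_nonneg (bddAbove_range_of_abs_le hC) hf.map_empty A)
    (posVariation_nonneg (bddAbove_range_neg_of_abs_le hC) hf.neg.map_empty A)

lemma totalVariation_le (hC : ∀ B, |f B| ≤ C) (A : Set α) : totalVariation f A ≤ 2 * C := by
  have hpos : posVariation f A ≤ C := posVariation_le fun B _ => (abs_le.1 (hC B)).2
  have hneg : posVariation (-f) A ≤ C := posVariation_le fun B _ => neg_le.1 (abs_le.1 (hC B)).1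
  exact (add_le_add hpos hneg).trans_eq (two_mul C).symm

lemma totalVariation_eq_zero_iff (hf : IsFinitelyAdditive f) (hC : ∀ B, |f B| ≤ C) :
    totalVariation f A = 0 ↔ ∀ B ⊆ A, f B = 0 := by
  have hpos := posVariation_nonneg (bddAbove_range_of_abs_le hC) hf.map_empty A
  have hneg := posVariation_nonneg (bddAbove_range_neg_of_abs_le hC) hf.neg.map_empty A
  constructor
  · intro h B hB
    have h1 := le_posVariation (bddAbove_range_of_abs_le hC) hB
    have h2 := le_posVariation (bddAbove_range_neg_of_abs_le hC) hB
    simp only [totalVariation, Pi.add_apply, Pi.neg_apply] at h h2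
    linarith
  · intro h
    have h1 : posVariation f A ≤ 0 := posVariation_le fun B hB => (h B hB).le
    have h2 : posVariation (-f) A ≤ 0 := posVariation_le fun B hB => by simp [h B hB]
    simp only [totalVariation, Pi.add_apply]
    linarith

lemma exists_nonneg_isFinitelyAdditive_eq_zero_iff {ν : ℕ → Set α → ℝ}
    (hν : ∀ n, IsFinitelyAdditive (ν n)) (hν0 : ∀ n A, 0 ≤ ν n A) (hνC : ∀ n A, ν n A ≤ C) :
    ∃ μ : Set α → ℝ, (∀ A, 0 ≤ μ A) ∧ IsFinitelyAdditive μ ∧ ∀ A, μ A = 0 ↔ ∀ n, ν n A = 0 := by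
  have hterm0 : ∀ A n, 0 ≤ (1 / 2 : ℝ) ^ n * ν n A := fun A n => by have := hν0 n A; positivity
  have hsum : ∀ A, Summable fun n => (1 / 2 : ℝ) ^ n * ν n A := fun A =>
    (summable_geometric_two.mul_right C).of_nonneg_of_le (hterm0 A)
      fun n => mul_le_mul_of_nonneg_left (hνC n A) (by positivity)
  refine ⟨fun A => ∑' n, (1 / 2 : ℝ) ^ n * ν n A, fun A => tsum_nonneg (hterm0 A),
    fun A B hAB => ?_, fun A => ⟨fun h n => ?_, fun h => by simp [h]⟩⟩
  · simp only [hν _ hAB, mul_add]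
    exact (hsum A).tsum_add (hsum B)
  · by_contra hn
    have := (hsum A).tsum_pos (hterm0 A) n
      (mul_pos (by positivity) ((hν0 n A).lt_of_ne' hn))
    exact this.ne' h

lemma exists_nonneg_isFinitelyAdditive_eq_zero_iff_forall_subset {m : ℕ → Set α → ℝ}
    (hm : ∀ n, IsFinitelyAdditive (m n)) (hC : ∀ n B, |m n B| ≤ C) :
    ∃ μ : Set α → ℝ, (∀ A, 0 ≤ μ A) ∧ IsFinitelyAdditive μ ∧
      ∀ A, μ A = 0 ↔ ∀ B ⊆ A, ∀ n, m n B = 0 := by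
  obtain ⟨μ, hμ0, hμ, hμν⟩ := exists_nonneg_isFinitelyAdditive_eq_zero_iff
    (fun n => isFinitelyAdditive_totalVariation (hm n) (hC n))
    (fun n => totalVariation_nonneg (hm n) (hC n)) (fun n => totalVariation_le (hC n))
  refine ⟨μ, hμ0, hμ, fun A => ?_⟩
  simp only [hμν, totalVariation_eq_zero_iff (hm _) (hC _)]
  exact ⟨fun h B hB n => h n B hB, fun h n B hB => h B hB n⟩

end FinitelyAdditive

def IsStrictlyPositiveMeasure (I : Set (Set α)) (μ : Set α → ℝ) : Prop :=
  (∀ A : Set α, 0 ≤ μ A) ∧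
  μ Set.univ = 1 ∧
  (∀ A B : Set α, (A \ B) ∪ (B \ A) ∈ I → μ A = μ B) ∧
  (∀ A B : Set α, A ∩ B ∈ I → μ (A ∪ B) = μ A + μ B) ∧
  (∀ A : Set α, 0 < μ A ↔ A ∉ I)

lemma IsFinitelyAdditive.isStrictlyPositiveMeasure_div {I : Set (Set ℕ)} (hI : IsIdealOmega I)
    {μ : Set ℕ → ℝ} (hμ : IsFinitelyAdditive μ) (hμ0 : ∀ A, 0 ≤ μ A)
    (hμI : ∀ A, μ A = 0 ↔ A ∈ I) :
    IsStrictlyPositiveMeasure I fun A => μ A / μ univ := by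
  have hnull : ∀ {A B}, A ∈ I → B ⊆ A → μ B = 0 := fun hA hBA => (hμI _).2 (hI.1 hA hBA)
  have huniv : 0 < μ univ := (hμ0 univ).lt_of_ne' fun h => hI.2.2.2 ((hμI univ).1 h)
  refine ⟨fun A => div_nonneg (hμ0 A) huniv.le, div_self huniv.ne', fun A B hAB => ?_,
    fun A B hAB => ?_, fun A => ?_⟩
  · dsimp only
    rw [hμ.eq_of_diff_eq_zero (hnull hAB subset_union_left) (hnull hAB subset_union_right)]
  · dsimp only
    rw [hμ.union_of_inter_eq_zero ((hμI _).2 hAB), add_div]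
  · rw [div_pos_iff_of_pos_right huniv, (hμ0 A).lt_iff_ne', Ne, hμI]

def indicatorLinf (A : Set ℕ) : LinfNat :=
  ⟨A.indicator 1, memℓp_infty ⟨1, forall_mem_range.2 fun n =>
    (norm_indicator_le_norm_self 1 n).trans_eq norm_one⟩⟩

@[simp]
lemma indicatorLinf_apply (A : Set ℕ) (n : ℕ) : indicatorLinf A n = A.indicator 1 n := rfl

lemma norm_indicatorLinf_le (A : Set ℕ) : ‖indicatorLinf A‖ ≤ 1 :=
  lp.norm_le_of_forall_le zero_le_one fun n =>
    (norm_indicator_le_norm_self 1 n).trans_eq norm_one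

lemma indicatorLinf_union {A B : Set ℕ} (h : Disjoint A B) :
    indicatorLinf (A ∪ B) = indicatorLinf A + indicatorLinf B :=
  lp.ext (indicator_union_of_disjoint h 1)

lemma indicatorLinf_mem_c0Set_iff {I : Set (Set ℕ)} (hI : IsIdealOmega I) {A : Set ℕ} :
    indicatorLinf A ∈ c0Set I ↔ A ∈ I := by
  refine ⟨fun h => ?_, fun hA ε hε => hI.1 hA fun n hn => ?_⟩
  · convert h 1 one_pos
    ext n
    by_cases hn : n ∈ A <;> simp [hn]
  · by_contra hnA
    simp [hnA] at hn
    linarith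

namespace ContinuousLinearMap

variable (T : LinfNat →L[ℝ] LinfNat) (n : ℕ)

lemma isFinitelyAdditive_apply_indicatorLinf :
    IsFinitelyAdditive fun A => T (indicatorLinf A) n := fun A B hAB => by
  simp only [indicatorLinf_union hAB, map_add, lp.coeFn_add, Pi.add_apply]

lemma abs_apply_indicatorLinf_le (A : Set ℕ) : |T (indicatorLinf A) n| ≤ ‖T‖ :=
  calc |T (indicatorLinf A) n| ≤ ‖T (indicatorLinf A)‖ :=
        (Real.norm_eq_abs _).symm.trans_le (lp.norm_apply_le_norm ENNReal.top_ne_zero _ n)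
    _ ≤ ‖T‖ * ‖indicatorLinf A‖ := T.le_opNorm _
    _ ≤ ‖T‖ := mul_le_of_le_one_right (norm_nonneg T) (norm_indicatorLinf_le A)

end ContinuousLinearMap

lemma exists_isStrictlyPositiveMeasure_of_ker {I : Set (Set ℕ)} (hI : IsIdealOmega I)
    (T : LinfNat →L[ℝ] LinfNat) (hT : ∀ A, T (indicatorLinf A) = 0 ↔ A ∈ I) :
    ∃ μ, IsStrictlyPositiveMeasure I μ := by
  obtain ⟨μ, hμ0, hμ, hμI⟩ := exists_nonneg_isFinitelyAdditive_eq_zero_iff_forall_subset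
    T.isFinitelyAdditive_apply_indicatorLinf T.abs_apply_indicatorLinf_le
  have hcoord : ∀ B, (∀ n, T (indicatorLinf B) n = 0) ↔ B ∈ I := fun B => by
    rw [← hT]
    exact ⟨fun h => lp.ext (funext h), fun h n => by simp [h]⟩
  refine ⟨_, hμ.isStrictlyPositiveMeasure_div hI hμ0 fun A => ?_⟩
  simp only [hμI, hcoord]
  exact ⟨fun h => h A subset_rfl, fun hA B hB => hI.1 hA hB⟩

end

/-- If `c_{0,I}` is complemented in `ℓ∞` then `P(ω)/I` admits a strictly positive
finitely additive measure. -/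
theorem strictly_positive_measure_of_complemented (I : Set (Set ℕ))
    (hI : IsIdealOmega I) (h : c0Complemented I) :
    ∃ μ : Set ℕ → ℝ,
      (∀ A : Set ℕ, 0 ≤ μ A) ∧
      μ Set.univ = 1 ∧
      (∀ A B : Set ℕ, (A \ B) ∪ (B \ A) ∈ I → μ A = μ B) ∧
      (∀ A B : Set ℕ, A ∩ B ∈ I → μ (A ∪ B) = μ A + μ B) ∧
      (∀ A : Set ℕ, 0 < μ A ↔ A ∉ I) := by
  obtain ⟨P, hPP, hPr⟩ := h
  have hfix : ∀ x, x ∈ range P ↔ P x = x :=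
    fun x => ⟨by rintro ⟨y, rfl⟩; exact hPP y, fun hx => ⟨x, hx⟩⟩
  refine exists_isStrictlyPositiveMeasure_of_ker hI (ContinuousLinearMap.id ℝ _ - P) fun A => ?_
  rw [sub_apply, ContinuousLinearMap.id_apply, sub_eq_zero, eq_comm,
    ← hfix, hPr, indicatorLinf_mem_c0Set_iff hI]
end

section
/- Let B be a complete Boolean algebra of cardinality at most the continuum 𝔠. Then there is a surjective Boolean algebra homomorphism h from the powerset algebra P(ω) onto B such that h(F) = ⊥ for every finite set F ⊆ ω; consequently B is isomorphic to P(ω)/I where I = {A ⊆ ω : h(A) = ⊥} is an ideal on ω containing all finite sets. -/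
open Cardinal


section BL
variable {β : Type*} [BooleanAlgebra β] (x : β)

lemma BL_part (a b : β) : ((a ⊓ x) ⊔ (b ⊓ xᶜ)) ⊓ x = a ⊓ x := by
  rw [inf_sup_right, inf_assoc, inf_assoc, compl_inf_self, inf_bot_eq, sup_bot_eq, inf_idem]

lemma BL_part' (a b : β) : ((a ⊓ x) ⊔ (b ⊓ xᶜ)) ⊓ xᶜ = b ⊓ xᶜ := by
  rw [inf_sup_right, inf_assoc, inf_assoc, inf_compl_self, inf_bot_eq, bot_sup_eq, inf_idem]

lemma BL_eq_iff (a b c d : β) :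
    (a ⊓ x) ⊔ (b ⊓ xᶜ) = (c ⊓ x) ⊔ (d ⊓ xᶜ) ↔ a ⊓ x = c ⊓ x ∧ b ⊓ xᶜ = d ⊓ xᶜ := by
  constructor
  · intro h
    exact ⟨by rw [← BL_part x a b, h, BL_part], by rw [← BL_part' x a b, h, BL_part']⟩
  · rintro ⟨h1, h2⟩
    rw [← BL_part x a b, ← BL_part' x a b, h1, h2, BL_part, BL_part']

lemma BL_split (a : β) : (a ⊓ x) ⊔ (a ⊓ xᶜ) = a := sup_inf_inf_compl

lemma BL_inter (a b c d : β) :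
    (((a ⊓ x) ⊔ (b ⊓ xᶜ)) ⊓ ((c ⊓ x) ⊔ (d ⊓ xᶜ))) = ((a ⊓ c) ⊓ x) ⊔ ((b ⊓ d) ⊓ xᶜ) := by
  rw [inf_sup_left]
  have h1 : ((a ⊓ x) ⊔ (b ⊓ xᶜ)) ⊓ (c ⊓ x) = (a ⊓ c) ⊓ x := by
    rw [inf_comm c x, ← inf_assoc, BL_part, inf_right_comm]
  have h2 : ((a ⊓ x) ⊔ (b ⊓ xᶜ)) ⊓ (d ⊓ xᶜ) = (b ⊓ d) ⊓ xᶜ := by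
    rw [inf_comm d xᶜ, ← inf_assoc, BL_part', inf_right_comm]
  rw [h1, h2]

lemma BL_union (a b c d : β) :
    (((a ⊓ x) ⊔ (b ⊓ xᶜ)) ⊔ ((c ⊓ x) ⊔ (d ⊓ xᶜ))) = ((a ⊔ c) ⊓ x) ⊔ ((b ⊔ d) ⊓ xᶜ) := by
  rw [inf_sup_right, inf_sup_right]
  rw [sup_assoc, ← sup_assoc (b ⊓ xᶜ), sup_comm (b ⊓ xᶜ) (c ⊓ x), sup_assoc, ← sup_assoc]

lemma BL_compl (a b : β) :
    ((a ⊓ x) ⊔ (b ⊓ xᶜ))ᶜ = (aᶜ ⊓ x) ⊔ (bᶜ ⊓ xᶜ) := by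
  apply compl_unique
  · rw [BL_inter, inf_compl_self, inf_compl_self, bot_inf_eq, bot_inf_eq, sup_bot_eq]
  · rw [BL_union, sup_compl_eq_top, sup_compl_eq_top, top_inf_eq, top_inf_eq, sup_compl_eq_top]

lemma BL_cancel {a a' b : β} (h : (a ⊓ a'ᶜ) ⊓ b = ⊥) (h' : (a' ⊓ aᶜ) ⊓ b = ⊥) :
    a ⊓ b = a' ⊓ b := by
  have e1 : a ⊓ b = (a ⊓ a') ⊓ b := by
    have : a ⊓ b = ((a ⊓ a') ⊓ b) ⊔ ((a ⊓ a'ᶜ) ⊓ b) := by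
      rw [← inf_sup_right, ← inf_sup_left, sup_compl_eq_top, inf_top_eq]
    rw [this, h, sup_bot_eq]
  have e2 : a' ⊓ b = (a ⊓ a') ⊓ b := by
    have : a' ⊓ b = ((a' ⊓ a) ⊓ b) ⊔ ((a' ⊓ aᶜ) ⊓ b) := by
      rw [← inf_sup_right, ← inf_sup_left, sup_compl_eq_top, inf_top_eq]
    rw [this, h', sup_bot_eq, inf_comm a' a]
  rw [e1, e2]

end BL

lemma BL_aux {β : Type*} [BooleanAlgebra β] {p q y : β} (e : p ⊓ y = q ⊓ y) :
    (p ⊓ qᶜ) ⊓ y = ⊥ := by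
  rw [inf_right_comm, e, inf_right_comm, inf_compl_self, bot_inf_eq]

lemma BL_le_iff {β : Type*} [BooleanAlgebra β] (a b : β) : a ≤ b ↔ a ⊓ bᶜ = ⊥ := by
  rw [← sdiff_eq, sdiff_eq_bot_iff]

section PH
variable {γ B : Type*} [BooleanAlgebra γ] [BooleanAlgebra B]

/-- Graph of a partial Boolean homomorphism. -/
structure IsPH (G : Set (γ × B)) : Prop where
  func : ∀ ⦃m : γ⦄ ⦃a b : B⦄, (m, a) ∈ G → (m, b) ∈ G → a = b
  mem_top : ((⊤ : γ), (⊤ : B)) ∈ G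
  mem_bot : ((⊥ : γ), (⊥ : B)) ∈ G
  inter : ∀ ⦃m n a b⦄, (m, a) ∈ G → (n, b) ∈ G → (m ⊓ n, a ⊓ b) ∈ G
  union : ∀ ⦃m n a b⦄, (m, a) ∈ G → (n, b) ∈ G → (m ⊔ n, a ⊔ b) ∈ G
  compl : ∀ ⦃m a⦄, (m, a) ∈ G → (mᶜ, aᶜ) ∈ G

def dom (G : Set (γ × B)) : Set γ := {m | ∃ a, (m, a) ∈ G}

def ext1 (G : Set (γ × B)) (x : γ) (b : B) : Set (γ × B) :=
  {p | ∃ m₁ a₁ m₂ a₂, (m₁, a₁) ∈ G ∧ (m₂, a₂) ∈ G ∧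
    p.1 = (m₁ ⊓ x) ⊔ (m₂ ⊓ xᶜ) ∧ p.2 = (a₁ ⊓ b) ⊔ (a₂ ⊓ bᶜ)}

variable {G : Set (γ × B)} {x : γ} {b : B}

lemma ext1_subset (hG : IsPH G) : G ⊆ ext1 G x b := by
  rintro ⟨m, a⟩ hm
  exact ⟨m, a, m, a, hm, hm, by rw [sup_inf_inf_compl], by rw [sup_inf_inf_compl]⟩

lemma ext1_mem (hG : IsPH G) : (x, b) ∈ ext1 G x b :=
  ⟨⊤, ⊤, ⊥, ⊥, hG.mem_top, hG.mem_bot, by simp, by simp⟩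

lemma ext1_dom : dom (ext1 G x b) = {m | ∃ m₁ ∈ dom G, ∃ m₂ ∈ dom G, m = (m₁ ⊓ x) ⊔ (m₂ ⊓ xᶜ)} := by
  ext m
  constructor
  · rintro ⟨a, m₁, a₁, m₂, a₂, h₁, h₂, hm, ha⟩
    exact ⟨m₁, ⟨a₁, h₁⟩, m₂, ⟨a₂, h₂⟩, hm⟩
  · rintro ⟨m₁, ⟨a₁, h₁⟩, m₂, ⟨a₂, h₂⟩, hm⟩
    exact ⟨_, m₁, a₁, m₂, a₂, h₁, h₂, hm, rfl⟩

theorem ext1_isPH (hG : IsPH G)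
    (C1 : ∀ ⦃m a⦄, (m, a) ∈ G → m ⊓ x = ⊥ → a ⊓ b = ⊥)
    (C2 : ∀ ⦃m a⦄, (m, a) ∈ G → m ≤ x → a ≤ b) :
    IsPH (ext1 G x b) := by
  have C2' : ∀ ⦃m a⦄, (m, a) ∈ G → m ⊓ xᶜ = ⊥ → a ⊓ bᶜ = ⊥ := by
    intro m a hm h
    rw [← BL_le_iff]
    exact C2 hm ((BL_le_iff m x).2 h)
  constructor
  · -- functionality
    rintro m a a' ⟨m₁, a₁, m₂, a₂, h₁, h₂, hm, ha⟩ ⟨n₁, c₁, n₂, c₂, k₁, k₂, hn, hc⟩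
    dsimp only at hm ha hn hc
    rw [hm] at hn
    obtain ⟨e1, e2⟩ := (BL_eq_iff x m₁ m₂ n₁ n₂).1 hn
    have f1 : a₁ ⊓ b = c₁ ⊓ b :=
      BL_cancel (C1 (hG.inter h₁ (hG.compl k₁)) (BL_aux e1))
        (C1 (hG.inter k₁ (hG.compl h₁)) (BL_aux e1.symm))
    have f2 : a₂ ⊓ bᶜ = c₂ ⊓ bᶜ :=
      BL_cancel (C2' (hG.inter h₂ (hG.compl k₂)) (BL_aux e2))
        (C2' (hG.inter k₂ (hG.compl h₂)) (BL_aux e2.symm))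
    rw [ha, hc, f1, f2]
  · exact ext1_subset hG hG.mem_top
  · exact ext1_subset hG hG.mem_bot
  · rintro m n a c ⟨m₁, a₁, m₂, a₂, h₁, h₂, hm, ha⟩ ⟨n₁, c₁, n₂, c₂, k₁, k₂, hn, hc⟩
    exact ⟨m₁ ⊓ n₁, a₁ ⊓ c₁, m₂ ⊓ n₂, a₂ ⊓ c₂, hG.inter h₁ k₁, hG.inter h₂ k₂,
      by dsimp only at *; rw [hm, hn, BL_inter], by dsimp only at *; rw [ha, hc, BL_inter]⟩
  · rintro m n a c ⟨m₁, a₁, m₂, a₂, h₁, h₂, hm, ha⟩ ⟨n₁, c₁, n₂, c₂, k₁, k₂, hn, hc⟩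
    exact ⟨m₁ ⊔ n₁, a₁ ⊔ c₁, m₂ ⊔ n₂, a₂ ⊔ c₂, hG.union h₁ k₁, hG.union h₂ k₂,
      by dsimp only at *; rw [hm, hn, BL_union], by dsimp only at *; rw [ha, hc, BL_union]⟩
  · rintro m a ⟨m₁, a₁, m₂, a₂, h₁, h₂, hm, ha⟩
    exact ⟨m₁ᶜ, a₁ᶜ, m₂ᶜ, a₂ᶜ, hG.compl h₁, hG.compl h₂,
      by dsimp only at *; rw [hm, BL_compl], by dsimp only at *; rw [ha, BL_compl]⟩

lemma isPH_sUnion {C : Set (Set (γ × B))} (hne : C.Nonempty) (hch : IsChain (· ⊆ ·) C)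
    (h : ∀ G ∈ C, IsPH G) : IsPH (⋃₀ C) := by
  have pair : ∀ {G G' : Set (γ × B)}, G ∈ C → G' ∈ C → ∃ H ∈ C, G ⊆ H ∧ G' ⊆ H := by
    intro G G' hG hG'
    rcases eq_or_ne G G' with rfl | hne'
    · exact ⟨G, hG, subset_rfl, subset_rfl⟩
    · rcases hch hG hG' hne' with h' | h'
      · exact ⟨G', hG', h', subset_rfl⟩
      · exact ⟨G, hG, subset_rfl, h'⟩
  constructor
  · rintro m a b ⟨G, hG, hmG⟩ ⟨G', hG', hmG'⟩
    obtain ⟨H, hH, s1, s2⟩ := pair hG hG'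
    exact (h H hH).func (s1 hmG) (s2 hmG')
  · obtain ⟨G, hG⟩ := hne
    exact ⟨G, hG, (h G hG).mem_top⟩
  · obtain ⟨G, hG⟩ := hne
    exact ⟨G, hG, (h G hG).mem_bot⟩
  · rintro m n a b ⟨G, hG, hmG⟩ ⟨G', hG', hmG'⟩
    obtain ⟨H, hH, s1, s2⟩ := pair hG hG'
    exact ⟨H, hH, (h H hH).inter (s1 hmG) (s2 hmG')⟩
  · rintro m n a b ⟨G, hG, hmG⟩ ⟨G', hG', hmG'⟩
    obtain ⟨H, hH, s1, s2⟩ := pair hG hG'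
    exact ⟨H, hH, (h H hH).union (s1 hmG) (s2 hmG')⟩
  · rintro m a ⟨G, hG, hmG⟩
    exact ⟨G, hG, (h G hG).compl hmG⟩

end PH

section Total
variable {γ B : Type*} [BooleanAlgebra γ] [CompleteBooleanAlgebra B]

theorem exists_total (G₀ : Set (γ × B)) (h₀ : IsPH G₀) :
    ∃ G, IsPH G ∧ G₀ ⊆ G ∧ ∀ m : γ, m ∈ dom G := by
  obtain ⟨G, hG₀G, hGmax⟩ := zorn_subset_nonempty {G | IsPH G ∧ G₀ ⊆ G}
    (fun c hc hchain hne => ⟨⋃₀ c,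
      ⟨isPH_sUnion hne hchain (fun H hH => (hc hH).1),
       (hne.elim fun H hH => (hc hH).2.trans (Set.subset_sUnion_of_mem hH))⟩,
      fun s hs => Set.subset_sUnion_of_mem hs⟩) G₀ ⟨h₀, subset_rfl⟩
  obtain ⟨hG, hsub⟩ := hGmax.prop
  refine ⟨G, hG, hsub, fun x => ?_⟩
  by_contra hx
  set b : B := sSup {a | ∃ m, m ≤ x ∧ (m, a) ∈ G} with hb
  have C2 : ∀ ⦃m : γ⦄ ⦃a : B⦄, (m, a) ∈ G → m ≤ x → a ≤ b := fun m a hm hle =>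
    le_sSup ⟨m, hle, hm⟩
  have C1 : ∀ ⦃m : γ⦄ ⦃a : B⦄, (m, a) ∈ G → m ⊓ x = ⊥ → a ⊓ b = ⊥ := by
    intro m a hm h
    rw [hb, inf_sSup_eq]
    apply le_bot_iff.1
    apply iSup_le; intro a'; apply iSup_le; rintro ⟨n, hnx, hn⟩
    have : (m ⊓ n, a ⊓ a') ∈ G := hG.inter hm hn
    have hmn : m ⊓ n = ⊥ := le_bot_iff.1 (le_trans (inf_le_inf_left m hnx) h.le)
    rw [hmn] at this
    rw [hG.func this hG.mem_bot]
  have hGsub : G ⊆ ext1 G x b := ext1_subset hG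
  have : ext1 G x b = G := hGmax.eq_of_ge ⟨ext1_isPH hG C1 C2, hsub.trans hGsub⟩ hGsub
  exact hx ⟨b, this ▸ ext1_mem hG⟩

end Total

open Set

abbrev II := Σ n : ℕ, Finset (Fin n → Bool)

def Ar (r : ℕ → Bool) : Set II := {x | (fun i : Fin x.1 => r i) ∈ x.2}

def basicSet (F : Finset (ℕ → Bool)) (ε : (ℕ → Bool) → Bool) : Set II :=
  {x | ∀ s ∈ F, (x ∈ Ar s ↔ ε s = true)}

lemma restr_injOn (F : Finset (ℕ → Bool)) :
    ∃ N : ℕ, ∀ n, N ≤ n → Set.InjOn (fun s : ℕ → Bool => (fun i : Fin n => s i)) F := by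
  classical
  set d : (ℕ → Bool) × (ℕ → Bool) → ℕ := fun p =>
    if h : ∃ k, p.1 k ≠ p.2 k then Nat.find h + 1 else 0 with hd
  refine ⟨(F ×ˢ F).sup d, fun n hn s hs t ht he => ?_⟩
  by_contra hst
  have h : ∃ k, s k ≠ t k := Function.ne_iff.1 hst
  have hk : Nat.find h + 1 ≤ (F ×ˢ F).sup d := by
    have hmem : (s, t) ∈ F ×ˢ F := Finset.mem_product.2 ⟨hs, ht⟩
    have : d (s, t) = Nat.find h + 1 := by simp [hd, h]
    exact this ▸ Finset.le_sup hmem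
  have hlt : Nat.find h < n := lt_of_lt_of_le (Nat.lt_of_lt_of_le (Nat.lt_succ_self _) hk) hn
  have := congrFun he ⟨Nat.find h, hlt⟩
  exact Nat.find_spec h this

lemma basicSet_infinite (F : Finset (ℕ → Bool)) (ε : (ℕ → Bool) → Bool) :
    (basicSet F ε).Infinite := by
  classical
  obtain ⟨N, hN⟩ := restr_injOn F
  set E : (n : ℕ) → Finset (Fin n → Bool) := fun n =>
    (F.filter fun s => ε s = true).image (fun s => (fun i : Fin n => s i)) with hE
  have hmem : ∀ n, N ≤ n → (⟨n, E n⟩ : II) ∈ basicSet F ε := by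
    intro n hn s hs
    constructor
    · intro h
      obtain ⟨t, htf, hte⟩ := Finset.mem_image.1 h
      obtain ⟨htF, htε⟩ := Finset.mem_filter.1 htf
      rwa [← hN n hn htF hs hte]
    · intro h
      exact Finset.mem_image.2 ⟨s, Finset.mem_filter.2 ⟨hs, h⟩, rfl⟩
  apply Set.infinite_of_injective_forall_mem
    (f := fun k : ℕ => (⟨N + k, E (N + k)⟩ : II))
  · intro a b hab
    have : N + a = N + b := congrArg Sigma.fst hab
    omega
  · intro k
    exact hmem (N + k) (Nat.le_add_right N k)

lemma Ar_eq_basic (r : ℕ → Bool) : Ar r = basicSet {r} (fun _ => true) := by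
  ext x; simp [basicSet]

lemma Ar_infinite (r : ℕ → Bool) : (Ar r).Infinite := by
  rw [Ar_eq_basic]; exact basicSet_infinite _ _

instance : Infinite II := Infinite.of_injective (fun n : ℕ => (⟨n, ∅⟩ : II))
  (fun a b h => congrArg Sigma.fst h)

def NN (S : Set (ℕ → Bool)) : Set (Set II) :=
  {m | ∃ T : Finset (Finset (ℕ → Bool) × ((ℕ → Bool) → Bool)),
    (∀ p ∈ T, ↑p.1 ⊆ S) ∧ m = ⋃ p ∈ T, basicSet p.1 p.2}

def DD (S : Set (ℕ → Bool)) : Set (Set II) :=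
  {m | ∃ m₀ ∈ NN S, (symmDiff m m₀).Finite}

lemma NN_mono {S S' : Set (ℕ → Bool)} (h : S ⊆ S') : NN S ⊆ NN S' := by
  rintro m ⟨T, hT, rfl⟩
  exact ⟨T, fun p hp => (hT p hp).trans h, rfl⟩

lemma DD_mono {S S' : Set (ℕ → Bool)} (h : S ⊆ S') : DD S ⊆ DD S' := by
  rintro m ⟨m₀, hm₀, hfin⟩
  exact ⟨m₀, NN_mono h hm₀, hfin⟩

lemma finite_mem_DD {S : Set (ℕ → Bool)} {m : Set II} (h : m.Finite) : m ∈ DD S := by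
  refine ⟨∅, ⟨∅, by simp, by simp⟩, ?_⟩
  simpa [symmDiff] using h

lemma Ar_mem_NN {S : Set (ℕ → Bool)} {r : ℕ → Bool} (h : r ∈ S) : Ar r ∈ NN S := by
  refine ⟨{({r}, fun _ => true)}, ?_, ?_⟩
  · intro p hp
    rw [Finset.mem_singleton] at hp
    subst hp
    simpa using h
  · simp [Ar_eq_basic]

lemma Ar_mem_DD {S : Set (ℕ → Bool)} {r : ℕ → Bool} (h : r ∈ S) : Ar r ∈ DD S :=
  ⟨Ar r, Ar_mem_NN h, by simp⟩

lemma univ_mem_NN (S : Set (ℕ → Bool)) : (Set.univ : Set II) ∈ NN S := by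
  classical
  refine ⟨{(∅, fun _ => true)}, by simp, ?_⟩
  ext x; simp [basicSet]

noncomputable local instance : DecidableEq (ℕ → Bool) := Classical.decEq _

def YS (r : ℕ → Bool) (v : Bool) : Set II := {x | x ∈ Ar r ↔ v = true}

lemma YS_true (r : ℕ → Bool) : YS r true = Ar r := by ext x; simp [YS]
lemma YS_false (r : ℕ → Bool) : YS r false = (Ar r)ᶜ := by ext x; simp [YS]

lemma basic_insert (F : Finset (ℕ → Bool)) (ε : (ℕ → Bool) → Bool) {r : ℕ → Bool}
    (hr : r ∉ F) (v : Bool) :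
    basicSet (insert r F) (fun s => if s = r then v else ε s) = basicSet F ε ∩ YS r v := by
  ext x
  simp only [basicSet, Set.mem_inter_iff, Set.mem_setOf_eq, Finset.mem_insert, YS]
  constructor
  · intro h
    refine ⟨fun s hs => ?_, ?_⟩
    · have := h s (Or.inr hs); rwa [if_neg (fun (e : s = r) => hr (e ▸ hs))] at this
    · have := h r (Or.inl rfl); rwa [if_pos rfl] at this
  · rintro ⟨h1, h2⟩ s hs
    rcases hs with rfl | hs
    · rwa [if_pos rfl]
    · rw [if_neg (fun (e : s = r) => hr (e ▸ hs))]; exact h1 s hs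

lemma NN_union {S : Set (ℕ → Bool)} {u v : Set II} (hu : u ∈ NN S) (hv : v ∈ NN S) :
    u ∪ v ∈ NN S := by
  classical
  obtain ⟨T₁, hT₁, rfl⟩ := hu
  obtain ⟨T₂, hT₂, rfl⟩ := hv
  refine ⟨T₁ ∪ T₂, fun p hp => ?_, ?_⟩
  · rcases Finset.mem_union.1 hp with h | h
    · exact hT₁ p h
    · exact hT₂ p h
  · ext x
    simp only [Set.mem_union, Set.mem_iUnion, Finset.mem_union]
    constructor
    · rintro (⟨p, hp, hx⟩ | ⟨p, hp, hx⟩)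
      · exact ⟨p, Or.inl hp, hx⟩
      · exact ⟨p, Or.inr hp, hx⟩
    · rintro ⟨p, hp | hp, hx⟩
      · exact Or.inl ⟨p, hp, hx⟩
      · exact Or.inr ⟨p, hp, hx⟩

lemma NN_inter_YS {S : Set (ℕ → Bool)} {u : Set II} {r : ℕ → Bool}
    (hu : u ∈ NN S) (hr : r ∉ S) (v : Bool) : u ∩ YS r v ∈ NN (insert r S) := by
  classical
  obtain ⟨T, hT, rfl⟩ := hu
  refine ⟨T.image (fun p => (insert r p.1, fun s => if s = r then v else p.2 s)),
    fun p hp => ?_, ?_⟩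
  · obtain ⟨q, hq, rfl⟩ := Finset.mem_image.1 hp
    intro s hs
    rcases Finset.mem_insert.1 hs with rfl | hs
    · exact Set.mem_insert _ _
    · exact Set.mem_insert_iff.2 (Or.inr (hT q hq hs))
  · ext x
    simp only [Set.mem_inter_iff, Set.mem_iUnion]
    constructor
    · rintro ⟨⟨p, hp, hx⟩, hy⟩
      refine ⟨(insert r p.1, fun s => if s = r then v else p.2 s),
        Finset.mem_image_of_mem _ hp, ?_⟩
      rw [basic_insert p.1 p.2 (fun h => hr (hT p hp h)) v]
      exact ⟨hx, hy⟩
    · rintro ⟨p, hp, hx⟩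
      obtain ⟨q, hq, rfl⟩ := Finset.mem_image.1 hp
      rw [basic_insert q.1 q.2 (fun h => hr (hT q hq h)) v] at hx
      exact ⟨⟨q, hq, hx.1⟩, hx.2⟩

lemma symmDiff_sub {m m₀ y : Set II} : (m₀ ∩ y) \ (symmDiff m m₀) ⊆ m ∩ y := by
  intro x hx
  simp only [Set.mem_diff, Set.mem_inter_iff, Set.mem_symmDiff] at *
  tauto

lemma DD_infinite_inter {S : Set (ℕ → Bool)} {m : Set II} {r : ℕ → Bool}
    (hm : m ∈ DD S) (hinf : m.Infinite) (hr : r ∉ S) (v : Bool) :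
    (m ∩ YS r v).Infinite := by
  obtain ⟨m₀, ⟨T, hT, rfl⟩, hfin⟩ := hm
  set m₀ : Set II := ⋃ p ∈ T, basicSet p.1 p.2 with hm₀
  have hsub : m ⊆ m₀ ∪ symmDiff m m₀ := by
    intro x hx
    by_cases h : x ∈ m₀
    · exact Or.inl h
    · exact Or.inr (Set.mem_symmDiff.2 (Or.inl ⟨hx, h⟩))
  have hm₀inf : m₀.Infinite := by
    by_contra h
    rw [Set.not_infinite] at h
    exact hinf (((h.union hfin).subset hsub))
  obtain ⟨x, hx⟩ := hm₀inf.nonempty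
  obtain ⟨p, hp, hxp⟩ := Set.mem_iUnion₂.1 hx
  have hrF : r ∉ p.1 := fun h => hr (hT p hp h)
  have hbig : (m₀ ∩ YS r v).Infinite := by
    apply Set.Infinite.mono (s := basicSet (insert r p.1) (fun s => if s = r then v else p.2 s))
    · rw [basic_insert p.1 p.2 hrF v]
      exact Set.inter_subset_inter_left _ (fun z hz => Set.mem_biUnion hp hz)
    · exact basicSet_infinite _ _
  exact ((hbig.diff hfin).mono symmDiff_sub)

lemma key_finite {S : Set (ℕ → Bool)} {m : Set II} {r : ℕ → Bool}
    (hm : m ∈ DD S) (hr : r ∉ S) {v : Bool} (h : m ∩ YS r v = ∅) : m.Finite := by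
  by_contra hinf
  rw [← Set.not_infinite, not_not] at hinf
  exact (DD_infinite_inter hm hinf hr v).nonempty.ne_empty h

lemma Ar_mem_DD_iff {S : Set (ℕ → Bool)} {s : ℕ → Bool} (h : Ar s ∈ DD S) : s ∈ S := by
  by_contra hs
  apply Ar_infinite s
  apply key_finite h hs (v := false)
  rw [YS_false, Set.inter_compl_self]

lemma DD_empty : DD (∅ : Set (ℕ → Bool)) = {m | m.Finite ∨ mᶜ.Finite} := by
  ext m
  constructor
  · rintro ⟨m₀, ⟨T, hT, rfl⟩, hfin⟩
    rcases T.eq_empty_or_nonempty with rfl | ⟨p, hp⟩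
    · left
      simpa [symmDiff] using hfin
    · right
      have : (⋃ q ∈ T, basicSet q.1 q.2) = Set.univ := by
        apply Set.eq_univ_of_forall
        intro x
        have hF : p.1 = ∅ := Finset.subset_empty.1 (fun s hs => absurd (hT p hp hs) (Set.notMem_empty s))
        refine Set.mem_biUnion hp ?_
        intro s hs
        rw [hF] at hs
        exact absurd hs (Finset.notMem_empty s)
      rw [this] at hfin
      have : symmDiff m Set.univ = mᶜ := by
        ext x; simp [Set.mem_symmDiff]
      rwa [this] at hfin
  · rintro (h | h)
    · exact finite_mem_DD h
    · refine ⟨Set.univ, univ_mem_NN _, ?_⟩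
      have : symmDiff m Set.univ = mᶜ := by ext x; simp [Set.mem_symmDiff]
      rwa [this]

lemma symmDiff_cancel_set (u e : Set II) : symmDiff (symmDiff u e) u = e := by
  ext x; simp only [Set.mem_symmDiff]; tauto

lemma DD_step_converse {S : Set (ℕ → Bool)} {m₁ m₂ : Set II} {r : ℕ → Bool}
    (h₁ : m₁ ∈ DD S) (h₂ : m₂ ∈ DD S) (hr : r ∉ S) :
    (m₁ ⊓ Ar r) ⊔ (m₂ ⊓ (Ar r)ᶜ) ∈ DD (insert r S) := by
  obtain ⟨u₁, hu₁, hf₁⟩ := h₁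
  obtain ⟨u₂, hu₂, hf₂⟩ := h₂
  refine ⟨(u₁ ∩ Ar r) ∪ (u₂ ∩ (Ar r)ᶜ), ?_, ?_⟩
  · apply NN_union
    · have := NN_inter_YS hu₁ hr true
      rwa [YS_true] at this
    · have := NN_inter_YS hu₂ hr false
      rwa [YS_false] at this
  · apply Set.Finite.subset (hf₁.union hf₂)
    intro x hx
    simp only [Set.mem_symmDiff, Set.sup_eq_union, Set.inf_eq_inter, Set.mem_union,
      Set.mem_inter_iff, Set.mem_compl_iff] at hx ⊢
    tauto

set_option maxHeartbeats 1000000 in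
lemma DD_step_decomp {S : Set (ℕ → Bool)} {m : Set II} {r : ℕ → Bool}
    (hm : m ∈ DD (insert r S)) (hr : r ∉ S) :
    ∃ m₁ ∈ DD S, ∃ m₂ ∈ DD S, m = (m₁ ⊓ Ar r) ⊔ (m₂ ⊓ (Ar r)ᶜ) := by
  classical
  obtain ⟨m₀, ⟨T, hT, rfl⟩, hfin⟩ := hm
  set m₀ : Set II := ⋃ p ∈ T, basicSet p.1 p.2 with hm₀
  set e : Set II := symmDiff m m₀ with he
  have herase : ∀ p ∈ T, ↑(p.1.erase r) ⊆ S := by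
    intro p hp s hs
    obtain ⟨hsr, hsF⟩ := Finset.mem_erase.1 hs
    rcases hT p hp hsF with h | h
    · exact absurd h hsr
    · exact h
  -- u₁
  set T₁ := T.filter (fun p => p.2 r = true ∨ r ∉ p.1) with hT₁
  set u₁ : Set II := ⋃ p ∈ T₁, basicSet (p.1.erase r) p.2 with hu₁
  have hu₁N : u₁ ∈ NN S := by
    refine ⟨T₁.image (fun p => (p.1.erase r, p.2)), ?_, ?_⟩
    · rintro q hq
      obtain ⟨p, hp, rfl⟩ := Finset.mem_image.1 hq
      exact herase p (Finset.mem_of_mem_filter p hp)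
    · ext x
      simp only [hu₁, Set.mem_iUnion]
      constructor
      · rintro ⟨p, hp, hx⟩
        exact ⟨(p.1.erase r, p.2), Finset.mem_image_of_mem _ hp, hx⟩
      · rintro ⟨q, hq, hx⟩
        obtain ⟨p, hp, rfl⟩ := Finset.mem_image.1 hq
        exact ⟨p, hp, hx⟩
  have h1 : ∀ x, x ∈ Ar r → (x ∈ m₀ ↔ x ∈ u₁) := by
    intro x hAr
    constructor
    · rintro hx
      obtain ⟨p, hp, hxp⟩ := Set.mem_iUnion₂.1 hx
      have hmem : p ∈ T₁ := by
        rw [hT₁, Finset.mem_filter]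
        refine ⟨hp, ?_⟩
        by_cases hrp : r ∈ p.1
        · exact Or.inl ((hxp r hrp).1 hAr)
        · exact Or.inr hrp
      exact Set.mem_iUnion₂.2 ⟨p, hmem, fun s hs => hxp s (Finset.mem_of_mem_erase hs)⟩
    · rintro hx
      obtain ⟨p, hp, hxp⟩ := Set.mem_iUnion₂.1 hx
      obtain ⟨hpT, hpc⟩ := Finset.mem_filter.1 hp
      refine Set.mem_iUnion₂.2 ⟨p, hpT, fun s hs => ?_⟩
      by_cases hsr : s = r
      · subst hsr
        rcases hpc with h | h
        · simp [hAr, h]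
        · exact absurd hs h
      · exact hxp s (Finset.mem_erase.2 ⟨hsr, hs⟩)
  -- u₂
  set T₂ := T.filter (fun p => p.2 r = false ∨ r ∉ p.1) with hT₂
  set u₂ : Set II := ⋃ p ∈ T₂, basicSet (p.1.erase r) p.2 with hu₂
  have hu₂N : u₂ ∈ NN S := by
    refine ⟨T₂.image (fun p => (p.1.erase r, p.2)), ?_, ?_⟩
    · rintro q hq
      obtain ⟨p, hp, rfl⟩ := Finset.mem_image.1 hq
      exact herase p (Finset.mem_of_mem_filter p hp)
    · ext x
      simp only [hu₂, Set.mem_iUnion]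
      constructor
      · rintro ⟨p, hp, hx⟩
        exact ⟨(p.1.erase r, p.2), Finset.mem_image_of_mem _ hp, hx⟩
      · rintro ⟨q, hq, hx⟩
        obtain ⟨p, hp, rfl⟩ := Finset.mem_image.1 hq
        exact ⟨p, hp, hx⟩
  have h2 : ∀ x, x ∉ Ar r → (x ∈ m₀ ↔ x ∈ u₂) := by
    intro x hAr
    constructor
    · rintro hx
      obtain ⟨p, hp, hxp⟩ := Set.mem_iUnion₂.1 hx
      have hmem : p ∈ T₂ := by
        rw [hT₂, Finset.mem_filter]
        refine ⟨hp, ?_⟩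
        by_cases hrp : r ∈ p.1
        · left
          have := (hxp r hrp)
          rcases Bool.eq_false_or_eq_true (p.2 r) with h | h
          · exact absurd (this.2 h) hAr
          · exact h
        · exact Or.inr hrp
      exact Set.mem_iUnion₂.2 ⟨p, hmem, fun s hs => hxp s (Finset.mem_of_mem_erase hs)⟩
    · rintro hx
      obtain ⟨p, hp, hxp⟩ := Set.mem_iUnion₂.1 hx
      obtain ⟨hpT, hpc⟩ := Finset.mem_filter.1 hp
      refine Set.mem_iUnion₂.2 ⟨p, hpT, fun s hs => ?_⟩
      by_cases hsr : s = r
      · subst hsr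
        rcases hpc with h | h
        · simp [hAr, h]
        · exact absurd hs h
      · exact hxp s (Finset.mem_erase.2 ⟨hsr, hs⟩)
  refine ⟨symmDiff u₁ e, ⟨u₁, hu₁N, by rw [symmDiff_cancel_set]; exact hfin⟩,
          symmDiff u₂ e, ⟨u₂, hu₂N, by rw [symmDiff_cancel_set]; exact hfin⟩, ?_⟩
  ext x
  have h1x := h1 x
  have h2x := h2 x
  have hex : x ∈ e ↔ (x ∈ m ∧ x ∉ m₀) ∨ (x ∈ m₀ ∧ x ∉ m) := Set.mem_symmDiff
  have hm₁x : x ∈ symmDiff u₁ e ↔ (x ∈ u₁ ∧ x ∉ e) ∨ (x ∈ e ∧ x ∉ u₁) := Set.mem_symmDiff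
  have hm₂x : x ∈ symmDiff u₂ e ↔ (x ∈ u₂ ∧ x ∉ e) ∨ (x ∈ e ∧ x ∉ u₂) := Set.mem_symmDiff
  simp only [Set.sup_eq_union, Set.inf_eq_inter, Set.mem_union, Set.mem_inter_iff,
    Set.mem_compl_iff]
  by_cases hAr : x ∈ Ar r
  · have h1x' := h1x hAr
    clear h1x h2x hm₂x
    simp only [hAr, not_true_eq_false, and_true, and_false, or_false]
    tauto
  · have h2x' := h2x hAr
    clear h1x h2x hm₁x
    simp only [hAr, not_false_eq_true, and_true, and_false, false_or]
    tauto

section Phase1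
variable {B : Type*} [CompleteBooleanAlgebra B]

def G00 (B : Type*) [CompleteBooleanAlgebra B] : Set (Set II × B) :=
  {p | (p.1.Finite ∧ p.2 = ⊥) ∨ (p.1ᶜ.Finite ∧ p.2 = ⊤)}

lemma fin_cofin (m : Set II) (h1 : m.Finite) (h2 : mᶜ.Finite) : False :=
  Set.infinite_univ (by rw [← Set.union_compl_self m]; exact h1.union h2)

lemma G00_isPH : IsPH (G00 B) := by
  constructor
  · rintro m a b (⟨h1, rfl⟩ | ⟨h1, rfl⟩) (⟨h2, rfl⟩ | ⟨h2, rfl⟩)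
    · rfl
    · exact (fin_cofin m h1 h2).elim
    · exact (fin_cofin m h2 h1).elim
    · rfl
  · exact Or.inr ⟨by simp, rfl⟩
  · exact Or.inl ⟨Set.finite_empty, rfl⟩
  · rintro m n a b (⟨h1, rfl⟩ | ⟨h1, rfl⟩) (⟨h2, rfl⟩ | ⟨h2, rfl⟩)
    · exact Or.inl ⟨h1.inter_of_left n, by simp⟩
    · exact Or.inl ⟨h1.inter_of_left n, by simp⟩
    · exact Or.inl ⟨h2.inter_of_right m, by simp⟩
    · refine Or.inr ⟨?_, by simp⟩
      show ((m ∩ n)ᶜ).Finite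
      rw [Set.compl_inter]
      exact h1.union h2
  · rintro m n a b (⟨h1, rfl⟩ | ⟨h1, rfl⟩) (⟨h2, rfl⟩ | ⟨h2, rfl⟩)
    · exact Or.inl ⟨h1.union h2, by simp⟩
    · refine Or.inr ⟨?_, by simp⟩
      show ((m ∪ n)ᶜ).Finite
      rw [Set.compl_union]
      exact h2.inter_of_right _
    · refine Or.inr ⟨?_, by simp⟩
      show ((m ∪ n)ᶜ).Finite
      rw [Set.compl_union]
      exact h1.inter_of_left _
    · refine Or.inr ⟨?_, by simp⟩
      show ((m ∪ n)ᶜ).Finite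
      rw [Set.compl_union]
      exact h1.inter_of_left _
  · rintro m a (⟨h1, rfl⟩ | ⟨h1, rfl⟩)
    · exact Or.inr ⟨by rwa [compl_compl], by simp⟩
    · exact Or.inl ⟨h1, by simp⟩

lemma Ar_compl_infinite (r : ℕ → Bool) : ((Ar r)ᶜ : Set II).Infinite := by
  apply Set.Infinite.mono (s := basicSet {r} (fun _ => false))
  · intro x hx
    simp only [basicSet, Finset.mem_singleton, Set.mem_setOf_eq] at hx
    have := hx r rfl
    simp only [Set.mem_compl_iff]
    intro h
    simpa using this.1 h
  · exact basicSet_infinite _ _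

variable (e : (ℕ → Bool) → B)

def P1 : Set (Set (Set II × B)) :=
  {G | IsPH G ∧ (∀ m : Set II, m.Finite → (m, (⊥ : B)) ∈ G) ∧
    (∀ r a, (Ar r, a) ∈ G → a = e r) ∧ dom G = DD {r | (Ar r, e r) ∈ G}}

lemma G00_mem_P1 : G00 B ∈ P1 e := by
  refine ⟨G00_isPH, fun m hm => Or.inl ⟨hm, rfl⟩, ?_, ?_⟩
  · rintro r a (⟨h, rfl⟩ | ⟨h, rfl⟩)
    · exact absurd h (Ar_infinite r)
    · exact absurd h (Ar_compl_infinite r)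
  · have hS : {r | (Ar r, e r) ∈ G00 B} = (∅ : Set (ℕ → Bool)) := by
      ext r
      simp only [Set.mem_setOf_eq, Set.mem_empty_iff_false, iff_false]
      rintro (⟨h, _⟩ | ⟨h, _⟩)
      · exact Ar_infinite r h
      · exact Ar_compl_infinite r h
    rw [hS, DD_empty]
    ext m
    constructor
    · rintro ⟨a, ⟨h, _⟩ | ⟨h, _⟩⟩
      · exact Or.inl h
      · exact Or.inr h
    · rintro (h | h)
      · exact ⟨⊥, Or.inl ⟨h, rfl⟩⟩
      · exact ⟨⊤, Or.inr ⟨h, rfl⟩⟩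

lemma chain_common {c : Set (Set (Set II × B))} (hchain : IsChain (· ⊆ ·) c)
    (hne : c.Nonempty) (W : Finset (ℕ → Bool))
    (h : ∀ s ∈ W, ∃ H ∈ c, (Ar s, e s) ∈ H) :
    ∃ H ∈ c, ∀ s ∈ W, (Ar s, e s) ∈ H := by
  classical
  induction W using Finset.induction_on with
  | empty => exact hne.elim fun H hH => ⟨H, hH, by simp⟩
  | @insert a W ha ih =>
    obtain ⟨H₁, hH₁, h₁⟩ := ih (fun s hs => h s (Finset.mem_insert_of_mem hs))
    obtain ⟨H₂, hH₂, h₂⟩ := h _ (Finset.mem_insert_self _ _)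
    rcases eq_or_ne H₁ H₂ with rfl | hne'
    · exact ⟨H₁, hH₁, fun s hs => (Finset.mem_insert.1 hs).elim
        (fun he => by rw [he]; exact h₂) (h₁ s)⟩
    · rcases hchain hH₁ hH₂ hne' with hsub | hsub
      · exact ⟨H₂, hH₂, fun s hs => (Finset.mem_insert.1 hs).elim
          (fun he => by rw [he]; exact h₂) (fun hs' => hsub (h₁ s hs'))⟩
      · exact ⟨H₁, hH₁, fun s hs => (Finset.mem_insert.1 hs).elim
          (fun he => by rw [he]; exact hsub h₂) (h₁ s)⟩

theorem phase1 : ∃ G : Set (Set II × B), IsPH G ∧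
    (∀ m : Set II, m.Finite → (m, (⊥ : B)) ∈ G) ∧ (∀ r, (Ar r, e r) ∈ G) := by
  classical
  have hZ : ∀ c ⊆ P1 e, IsChain (· ⊆ ·) c → c.Nonempty →
      ∃ ub ∈ P1 e, ∀ s ∈ c, s ⊆ ub := by
    intro c hc hchain hne
    refine ⟨⋃₀ c, ⟨isPH_sUnion hne hchain (fun H hH => (hc hH).1), ?_, ?_, ?_⟩,
      fun s hs => Set.subset_sUnion_of_mem hs⟩
    · obtain ⟨H, hH⟩ := hne
      exact fun m hm => Set.subset_sUnion_of_mem hH ((hc hH).2.1 m hm)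
    · rintro r a ⟨H, hH, hmem⟩
      exact (hc hH).2.2.1 r a hmem
    · apply Set.Subset.antisymm
      · rintro m ⟨a, H, hH, hmem⟩
        have hmd : m ∈ dom H := ⟨a, hmem⟩
        rw [(hc hH).2.2.2] at hmd
        refine DD_mono (fun r hr => ?_) hmd
        exact ⟨H, hH, hr⟩
      · rintro m ⟨m₀, ⟨T, hT, hTeq⟩, hfin⟩
        have hWall : ∀ s ∈ T.sup Prod.fst, ∃ H ∈ c, (Ar s, e s) ∈ H := by
          intro s hs
          obtain ⟨p, hp, hsp⟩ := Finset.mem_sup.1 hs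
          exact hT p hp hsp
        obtain ⟨H, hH, hHall⟩ := chain_common e hchain hne _ hWall
        have hTH : ∀ p ∈ T, ↑p.1 ⊆ {r | (Ar r, e r) ∈ H} := by
          intro p hp s hs
          exact hHall s (Finset.mem_of_subset (Finset.le_sup (f := Prod.fst) hp) hs)
        have hmd : m ∈ DD {r | (Ar r, e r) ∈ H} := ⟨m₀, ⟨T, hTH, hTeq⟩, hfin⟩
        rw [← (hc hH).2.2.2] at hmd
        obtain ⟨a, ha⟩ := hmd
        exact ⟨a, H, hH, ha⟩
  obtain ⟨G, hG0G, hmax⟩ := zorn_subset_nonempty (P1 e) hZ (G00 B) (G00_mem_P1 e)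
  obtain ⟨hGPH, hGfin, hGval, hGdom⟩ := hmax.prop
  refine ⟨G, hGPH, hGfin, fun r => ?_⟩
  by_contra hrS
  set S := {r' | (Ar r', e r') ∈ G} with hS
  have hrS' : r ∉ S := hrS
  have C1 : ∀ ⦃m : Set II⦄ ⦃a : B⦄, (m, a) ∈ G → m ⊓ Ar r = ⊥ → a ⊓ e r = ⊥ := by
    intro m a hm h
    have hmD : m ∈ DD S := by rw [← hGdom]; exact ⟨a, hm⟩
    have hfin : m.Finite := key_finite hmD hrS' (v := true) (by rw [YS_true]; exact h)
    rw [hGPH.func hm (hGfin m hfin), bot_inf_eq]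
  have C2 : ∀ ⦃m : Set II⦄ ⦃a : B⦄, (m, a) ∈ G → m ≤ Ar r → a ≤ e r := by
    intro m a hm h
    have hmD : m ∈ DD S := by rw [← hGdom]; exact ⟨a, hm⟩
    have h' : m ⊓ (Ar r)ᶜ = ⊥ := (BL_le_iff m (Ar r)).1 h
    have hfin : m.Finite := key_finite hmD hrS' (v := false) (by rw [YS_false]; exact h')
    rw [hGPH.func hm (hGfin m hfin)]
    exact bot_le
  have hPH' : IsPH (ext1 G (Ar r) (e r)) := ext1_isPH hGPH C1 C2
  have hsub : G ⊆ ext1 G (Ar r) (e r) := ext1_subset hGPH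
  have hmemx : (Ar r, e r) ∈ ext1 G (Ar r) (e r) := ext1_mem hGPH
  have hdom' : dom (ext1 G (Ar r) (e r)) = DD (insert r S) := by
    rw [ext1_dom]
    apply Set.Subset.antisymm
    · rintro m ⟨m₁, hm₁, m₂, hm₂, rfl⟩
      rw [hGdom] at hm₁ hm₂
      exact DD_step_converse hm₁ hm₂ hrS'
    · intro m hm
      obtain ⟨m₁, hm₁, m₂, hm₂, rfl⟩ := DD_step_decomp hm hrS'
      refine ⟨m₁, ?_, m₂, ?_, rfl⟩ <;> rw [hGdom] <;> assumption
  have hSG' : {r' | (Ar r', e r') ∈ ext1 G (Ar r) (e r)} = insert r S := by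
    apply Set.Subset.antisymm
    · intro s hs
      have hd : Ar s ∈ dom (ext1 G (Ar r) (e r)) := ⟨e s, hs⟩
      rw [hdom'] at hd
      exact Ar_mem_DD_iff hd
    · intro s hs
      rcases Set.mem_insert_iff.1 hs with rfl | hs'
      · exact hmemx
      · exact hsub hs'
  have hG'P1 : ext1 G (Ar r) (e r) ∈ P1 e := by
    refine ⟨hPH', fun m hm => hsub (hGfin m hm), ?_, ?_⟩
    · intro s a ha
      have hsin : s ∈ insert r S := by
        have hd : Ar s ∈ dom (ext1 G (Ar r) (e r)) := ⟨a, ha⟩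
        rw [hdom'] at hd
        exact Ar_mem_DD_iff hd
      rcases Set.mem_insert_iff.1 hsin with rfl | hs'
      · exact hPH'.func ha hmemx
      · exact hPH'.func ha (hsub hs')
    · rw [hdom', hSG']
  have heq : ext1 G (Ar r) (e r) = G := hmax.eq_of_ge hG'P1 hsub
  exact hrS (heq ▸ hmemx)

end Phase1

theorem main_II {B : Type*} [CompleteBooleanAlgebra B] (e : (ℕ → Bool) → B)
    (he : Function.Surjective e) :
    ∃ h : Set II → B, Function.Surjective h ∧
      (∀ X Y, h (X ∪ Y) = h X ⊔ h Y) ∧ (∀ X Y, h (X ∩ Y) = h X ⊓ h Y) ∧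
      (∀ X, h Xᶜ = (h X)ᶜ) ∧ h Set.univ = ⊤ ∧ h ∅ = ⊥ ∧
      (∀ X : Set II, X.Finite → h X = ⊥) := by
  obtain ⟨G₁, hPH₁, hfin₁, hAr₁⟩ := phase1 e
  obtain ⟨G, hPH, hsub, htot⟩ := exists_total G₁ hPH₁
  choose h hh using htot
  have huniq : ∀ m a, (m, a) ∈ G → h m = a := fun m a ha => hPH.func (hh m) ha
  refine ⟨h, ?_, ?_, ?_, ?_, ?_, ?_, ?_⟩
  · intro b
    obtain ⟨r, rfl⟩ := he b
    exact ⟨Ar r, huniq _ _ (hsub (hAr₁ r))⟩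
  · intro X Y; exact huniq _ _ (hPH.union (hh X) (hh Y))
  · intro X Y; exact huniq _ _ (hPH.inter (hh X) (hh Y))
  · intro X; exact huniq _ _ (hPH.compl (hh X))
  · exact huniq _ _ hPH.mem_top
  · exact huniq _ _ hPH.mem_bot
  · intro X hX; exact huniq _ _ (hsub (hfin₁ X hX))


/-- Every complete Boolean algebra of cardinality at most the continuum is a quotient
of `P(ω)` by an ideal containing all finite sets: there is a surjective Boolean
homomorphism `h : P(ω) → B` vanishing on finite sets. -/
theorem complete_boolean_algebra_quotient_of_powerset (B : Type*)
    [CompleteBooleanAlgebra B] (hcard : #B ≤ Cardinal.continuum) :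
    ∃ h : Set ℕ → B, Function.Surjective h ∧
      (∀ X Y : Set ℕ, h (X ∪ Y) = h X ⊔ h Y) ∧
      (∀ X Y : Set ℕ, h (X ∩ Y) = h X ⊓ h Y) ∧
      (∀ X : Set ℕ, h Xᶜ = (h X)ᶜ) ∧
      h Set.univ = ⊤ ∧ h ∅ = ⊥ ∧
      (∀ X : Set ℕ, X.Finite → h X = ⊥) := by
  classical
  obtain ⟨f⟩ : Nonempty (B ↪ (ℕ → Bool)) := by
    rw [← Cardinal.lift_mk_le']
    have h1 : #(ℕ → Bool) = Cardinal.continuum := by simp [Cardinal.mk_arrow]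
    rw [h1, Cardinal.lift_continuum, Cardinal.lift_le_continuum]
    exact hcard
  haveI : Nonempty B := ⟨⊥⟩
  have he : Function.Surjective (Function.invFun f) := Function.invFun_surjective f.injective
  obtain ⟨h, hsurj, hun, hint, hcompl, htop, hbot, hfin⟩ := main_II _ he
  haveI : Encodable II := Encodable.ofCountable II
  haveI : Denumerable II := Denumerable.ofEncodableOfInfinite II
  set φ : ℕ ≃ II := (Denumerable.eqv II).symm with hφ
  refine ⟨fun X => h (φ '' X), ?_, ?_, ?_, ?_, ?_, ?_, ?_⟩
  · intro b
    obtain ⟨m, rfl⟩ := hsurj b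
    exact ⟨φ ⁻¹' m, by dsimp only; rw [Set.image_preimage_eq m φ.surjective]⟩
  · intro X Y; dsimp only; rw [Set.image_union, hun]
  · intro X Y; dsimp only; rw [Set.image_inter φ.injective, hint]
  · intro X; dsimp only; rw [Set.image_compl_eq φ.bijective, hcompl]
  · dsimp only; rw [Set.image_univ, Equiv.range_eq_univ, htop]
  · dsimp only; rw [Set.image_empty, hbot]
  · intro X hX; exact hfin _ (hX.image φ)
end

section
/- Let K be a compact Hausdorff space. Then C(K) embeds isomorphically into ℓ∞ (i.e., there is an injective bounded linear map from C(K) into ℓ∞ with closed range) if and only if C(K) embeds isometrically into ℓ∞ (i.e., there is a linear isometry from C(K) into ℓ∞). -/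
/-!
If `T : C(K) → ℓ∞` is an isomorphic embedding, then `c ‖f‖ ≤ supₙ |(T f)ₙ|` for some `c > 0`.
Each coordinate functional is dominated by a finite measure `μₙ` (the Riesz measure of its
modulus), so `supₙ μₙ V ≥ c` for every nonempty open `V`.

Call a nonempty open `W` `δ`-stable if passing to a nonempty open subset lowers `supₙ μₙ` by at
most `δ`. Every nonempty open set contains a `δ`-stable one, so by Zorn there is a disjoint family
`D` of `δ`-stable sets meeting every nonempty open set; `D` is countable since each member has
positive mass for one of the countably many finite measures `μₙ`.

If `f` attains `‖f‖` at `x₀`, some `W ∈ D` meets `{f > (1 - ε) ‖f‖}`, and stability of `W`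
provides an `n` for which `μₙ` puts all but a small part of its mass on `W` inside this set;
the `μₙ`-average of `f` over `W` is then at least `(1 - 3ε) ‖f‖`. These countably many averages
are functionals of norm at most one that norm `C(K)`, hence give an isometric embedding into `ℓ∞`.
-/

noncomputable section

open MeasureTheory Set Pointwise CompactlySupported
open scoped NNReal ENNReal

lemma abs_sub_clamp_le {a b₁ b₂ : ℝ} (hb₁ : 0 ≤ b₁) (hb₂ : 0 ≤ b₂) (ha : |a| ≤ b₁ + b₂) :
    |a - max (min a b₁) (-b₁)| ≤ b₂ := by
  rw [abs_le] at ha ⊢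
  obtain ⟨h₁, h₁'⟩ | ⟨h₁, h₁'⟩ := min_cases a b₁ <;>
    obtain ⟨h₂, h₂'⟩ | ⟨h₂, h₂'⟩ := max_cases (min a b₁) (-b₁) <;>
    constructor <;> linarith

namespace ContinuousMap

variable {X : Type*} [TopologicalSpace X]

lemma exists_add_eq_of_abs_le_add {g f₁ f₂ : C(X, ℝ)} (hf₁ : 0 ≤ f₁) (hf₂ : 0 ≤ f₂)
    (hg : |g| ≤ f₁ + f₂) : ∃ g₁ g₂ : C(X, ℝ), |g₁| ≤ f₁ ∧ |g₂| ≤ f₂ ∧ g₁ + g₂ = g := by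
  refine ⟨(g ⊓ f₁) ⊔ -f₁, g - ((g ⊓ f₁) ⊔ -f₁), le_def.2 fun x => ?_, le_def.2 fun x => ?_,
    add_sub_cancel _ _⟩
  · have := le_def.1 hf₁ x
    simp only [abs_apply, sup_apply, inf_apply, neg_apply, abs_le, zero_apply] at this ⊢
    exact ⟨le_max_right _ _, max_le (min_le_right _ _) (by linarith)⟩
  · simpa using abs_sub_clamp_le (le_def.1 hf₁ x) (le_def.1 hf₂ x) (le_def.1 hg x)

variable [CompactSpace X]

lemma norm_le_norm_of_abs_le {f g : C(X, ℝ)} (h : |g| ≤ f) : ‖g‖ ≤ ‖f‖ :=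
  (g.norm_le (norm_nonneg f)).2 fun x =>
    ((le_def.1 h x).trans (le_abs_self (f x))).trans (f.norm_coe_le_norm x)

lemma exists_mem_pair_apply_eq_norm [Nonempty X] (f : C(X, ℝ)) :
    ∃ g ∈ ({f, -f} : Set C(X, ℝ)), ∃ x, g x = ‖f‖ := by
  obtain ⟨x, -, hx⟩ := isCompact_univ.exists_isMaxOn univ_nonempty f.continuous.norm.continuousOn
  have hfx : |f x| = ‖f‖ :=
    le_antisymm (f.norm_coe_le_norm x) ((f.norm_le (norm_nonneg _)).2 fun y => hx (mem_univ y))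
  rcases abs_choice (f x) with h | h
  · exact ⟨f, mem_insert _ _, x, by rw [← h, hfx]⟩
  · exact ⟨-f, mem_insert_of_mem _ rfl, x, by rw [neg_apply, ← h, hfx]⟩

lemma integrable [MeasurableSpace X] [OpensMeasurableSpace X] (μ : Measure X) [IsFiniteMeasure μ]
    (f : C(X, ℝ)) : Integrable f μ :=
  f.continuous.integrable_of_hasCompactSupport (HasCompactSupport.of_compactSpace _)

end ContinuousMap

namespace StrongDual

variable {X : Type*} [TopologicalSpace X] [CompactSpace X] (φ : StrongDual ℝ C(X, ℝ))

/-- The modulus `|φ| f` for `f ≥ 0`; for other `f` the set is empty and the value is the junk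
`sSup ∅ = 0`. -/
def modulus (f : C(X, ℝ)) : ℝ := sSup (φ '' {g | |g| ≤ f})

lemma bddAbove_image_abs_le (f : C(X, ℝ)) : BddAbove (φ '' {g | |g| ≤ f}) := by
  refine ⟨‖φ‖ * ‖f‖, ?_⟩
  rintro _ ⟨g, hg, rfl⟩
  exact (le_abs_self _).trans ((φ.le_opNorm g).trans
    (mul_le_mul_of_nonneg_left (ContinuousMap.norm_le_norm_of_abs_le hg) (norm_nonneg φ)))

omit [CompactSpace X] in
lemma image_abs_le_nonempty {f : C(X, ℝ)} (hf : 0 ≤ f) : (φ '' {g | |g| ≤ f}).Nonempty :=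
  ⟨φ 0, 0, by simpa using hf, rfl⟩

lemma apply_le_modulus {f g : C(X, ℝ)} (hg : |g| ≤ f) : φ g ≤ φ.modulus f :=
  le_csSup (φ.bddAbove_image_abs_le f) ⟨g, hg, rfl⟩

lemma abs_apply_le_modulus_abs (f : C(X, ℝ)) : |φ f| ≤ φ.modulus |f| :=
  abs_le'.2 ⟨φ.apply_le_modulus le_rfl, by simpa using φ.apply_le_modulus (g := -f) (by simp)⟩

lemma modulus_nonneg {f : C(X, ℝ)} (hf : 0 ≤ f) : 0 ≤ φ.modulus f := by
  simpa using φ.apply_le_modulus (g := 0) (by simpa using hf)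

lemma modulus_le {f : C(X, ℝ)} (hf : 0 ≤ f) : φ.modulus f ≤ ‖φ‖ * ‖f‖ :=
  csSup_le (φ.image_abs_le_nonempty hf) fun _ ⟨g, hg, hφg⟩ => hφg ▸
    (le_abs_self _).trans ((φ.le_opNorm g).trans
      (mul_le_mul_of_nonneg_left (ContinuousMap.norm_le_norm_of_abs_le hg) (norm_nonneg φ)))

lemma modulus_add {f₁ f₂ : C(X, ℝ)} (hf₁ : 0 ≤ f₁) (hf₂ : 0 ≤ f₂) :
    φ.modulus (f₁ + f₂) = φ.modulus f₁ + φ.modulus f₂ := by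
  have himage : φ '' {g | |g| ≤ f₁ + f₂} = φ '' {g | |g| ≤ f₁} + φ '' {g | |g| ≤ f₂} := by
    ext y
    simp only [mem_image, mem_ofPred_eq, Set.mem_add]
    constructor
    · rintro ⟨g, hg, rfl⟩
      obtain ⟨g₁, g₂, hg₁, hg₂, rfl⟩ := ContinuousMap.exists_add_eq_of_abs_le_add hf₁ hf₂ hg
      exact ⟨_, ⟨g₁, hg₁, rfl⟩, _, ⟨g₂, hg₂, rfl⟩, (map_add φ g₁ g₂).symm⟩
    · rintro ⟨_, ⟨g₁, hg₁, rfl⟩, _, ⟨g₂, hg₂, rfl⟩, rfl⟩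
      exact ⟨g₁ + g₂, (abs_add_le g₁ g₂).trans (add_le_add hg₁ hg₂), map_add φ g₁ g₂⟩
  rw [modulus, himage, csSup_add (φ.image_abs_le_nonempty hf₁) (φ.bddAbove_image_abs_le f₁)
    (φ.image_abs_le_nonempty hf₂) (φ.bddAbove_image_abs_le f₂)]
  rfl

lemma modulus_smul {c : ℝ} (hc : 0 ≤ c) (f : C(X, ℝ)) :
    φ.modulus (c • f) = c * φ.modulus f := by
  obtain rfl | hc := hc.eq_or_lt
  · have h := φ.modulus_add le_rfl le_rfl
    simp only [add_zero, left_eq_add] at h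
    rw [zero_smul, h, zero_mul]
  have habs (g : C(X, ℝ)) : |c⁻¹ • g| = c⁻¹ • |g| := by
    ext x
    simp [abs_mul, abs_of_pos hc]
  have hset : {g : C(X, ℝ) | |g| ≤ c • f} = c • {g | |g| ≤ f} := by
    ext g
    rw [mem_smul_set_iff_inv_smul_mem₀ hc.ne', mem_ofPred_eq, mem_ofPred_eq, habs,
      inv_smul_le_iff_of_pos hc]
  rw [modulus, hset, image_smul_set, Real.sSup_smul_of_nonneg hc.le, smul_eq_mul, modulus]

def modulusLinearMap : C_c(X, ℝ≥0) →ₗ[ℝ≥0] ℝ≥0 where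
  toFun f := ⟨φ.modulus f.toReal, φ.modulus_nonneg fun x => by simp⟩
  map_add' f g := by
    ext
    simp only [CompactlySupportedContinuousMap.toReal_add]
    exact φ.modulus_add (fun x => by simp) (fun x => by simp)
  map_smul' c f := by
    ext
    simp only [CompactlySupportedContinuousMap.toReal_smul]
    exact φ.modulus_smul c.2 _

lemma coe_modulusLinearMap_apply (f : C_c(X, ℝ≥0)) :
    (φ.modulusLinearMap f : ℝ) = φ.modulus f.toReal :=
  rfl

theorem exists_measure_abs_apply_le [T2Space X] [MeasurableSpace X] [BorelSpace X] :
    ∃ μ : Measure X, IsFiniteMeasure μ ∧ μ.real univ ≤ ‖φ‖ ∧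
      ∀ f : C(X, ℝ), |φ f| ≤ ∫ x, |f x| ∂μ := by
  set μ := NNRealRMK.rieszMeasure φ.modulusLinearMap
  have hint (f : C(X, ℝ)) : ∫ x, |f x| ∂μ = φ.modulus |f| := by
    let F : C_c(X, ℝ≥0) := ⟨⟨fun x => ‖f x‖₊, by fun_prop⟩, HasCompactSupport.of_compactSpace _⟩
    have hF : (F.toReal : C(X, ℝ)) = |f| := by ext x; simp [F]
    calc ∫ x, |f x| ∂μ = ∫ x, ((F x : ℝ≥0) : ℝ) ∂μ := by simp [F]
      _ = φ.modulus |f| := by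
        rw [NNRealRMK.integral_rieszMeasure, coe_modulusLinearMap_apply, hF]
  refine ⟨μ, inferInstance, ?_, fun f => (φ.abs_apply_le_modulus_abs f).trans (hint f).ge⟩
  have hone : ‖(1 : C(X, ℝ))‖ ≤ 1 := (ContinuousMap.norm_le _ zero_le_one).2 fun x => by simp
  calc μ.real univ = φ.modulus |1| := by simpa using hint 1
    _ ≤ ‖φ‖ * ‖(1 : C(X, ℝ))‖ := by
      rw [abs_of_nonneg zero_le_one]
      exact φ.modulus_le zero_le_one
    _ ≤ ‖φ‖ := mul_le_of_le_one_right (norm_nonneg φ) hone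

end StrongDual

theorem exists_pairwiseDisjoint_forall_inter_nonempty {X : Type*} [TopologicalSpace X]
    {P : Set X → Prop} (hP : ∀ U, IsOpen U → U.Nonempty → ∃ W ⊆ U, W.Nonempty ∧ P W) :
    ∃ D : Set (Set X), (∀ W ∈ D, P W) ∧ D.PairwiseDisjoint id ∧
      ∀ U, IsOpen U → U.Nonempty → ∃ W ∈ D, (U ∩ W).Nonempty := by
  obtain ⟨D, hD⟩ := zorn_subset {D : Set (Set X) | (∀ W ∈ D, P W) ∧ D.PairwiseDisjoint id}
    fun c hc hchain => ⟨⋃₀ c, ⟨fun W ⟨D, hD, hW⟩ => (hc hD).1 W hW,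
      hchain.pairwise_sUnion.2 fun D hD => (hc hD).2⟩, fun _ => subset_sUnion_of_mem⟩
  refine ⟨D, hD.prop.1, hD.prop.2, fun U hU hU' => ?_⟩
  by_contra! hdisj
  obtain ⟨W, hWU, hW, hPW⟩ := hP U hU hU'
  have hWD : W ∈ D := hD.mem_of_prop_insert
    ⟨forall_mem_insert.2 ⟨hPW, hD.prop.1⟩, hD.prop.2.insert fun V hV _ =>
      (disjoint_iff_inter_eq_empty.2 (hdisj V hV)).mono_left hWU⟩
  exact hW.ne_empty (by rw [← hdisj W hWD, inter_eq_right.2 hWU])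

section SetAverage

variable {X : Type*} [TopologicalSpace X] [CompactSpace X] [MeasurableSpace X]
  [OpensMeasurableSpace X] (μ : Measure X) [IsFiniteMeasure μ]

def setAverageCLM (W : Set X) : StrongDual ℝ C(X, ℝ) :=
  LinearMap.mkContinuous
    { toFun f := ⨍ x in W, f x ∂μ
      map_add' f g := by
        simp only [setAverage_eq, ContinuousMap.add_apply, smul_eq_mul, ← mul_add]
        rw [integral_add (f.integrable _).integrableOn (g.integrable _).integrableOn]
      map_smul' c f := by
        simp [setAverage_eq, integral_const_mul, mul_left_comm] }
    1 fun f => by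
      simp only [LinearMap.coe_mk, AddHom.coe_mk, setAverage_eq, smul_eq_mul, norm_mul, norm_inv,
        Real.norm_eq_abs, abs_of_nonneg measureReal_nonneg, one_mul]
      calc (μ.real W)⁻¹ * ‖∫ x in W, f x ∂μ‖ ≤ (μ.real W)⁻¹ * (‖f‖ * μ.real W) :=
            mul_le_mul_of_nonneg_left (norm_setIntegral_le_of_norm_le_const (measure_lt_top _ _)
              fun x _ => f.norm_coe_le_norm x) (inv_nonneg.2 measureReal_nonneg)
        _ ≤ ‖f‖ := by
          rw [mul_left_comm]
          exact mul_le_of_le_one_right (norm_nonneg f) inv_mul_le_one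

lemma setAverageCLM_apply (W : Set X) (f : C(X, ℝ)) : setAverageCLM μ W f = ⨍ x in W, f x ∂μ :=
  rfl

lemma norm_setAverageCLM_le (W : Set X) : ‖setAverageCLM μ W‖ ≤ 1 :=
  LinearMap.mkContinuous_norm_le _ zero_le_one _

lemma le_setIntegral_of_le_norm {W : Set X} (hW : MeasurableSet W) {f : C(X, ℝ)} {a : ℝ}
    (ha : a ≤ ‖f‖) :
    a * μ.real W - 2 * ‖f‖ * μ.real (W \ {x | a < f x}) ≤ ∫ x in W, f x ∂μ := by
  set U := {x | a < f x}
  have hU : MeasurableSet U := (isOpen_lt continuous_const f.continuous).measurableSet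
  have hsplit := measureReal_inter_add_sdiff (μ := μ) (s := W) hU
  have h₁ : a * μ.real (W ∩ U) ≤ ∫ x in W ∩ U, f x ∂μ :=
    setIntegral_ge_of_const_le_real (hW.inter hU) (measure_ne_top _ _) (fun x hx => hx.2.le)
      (f.integrable μ).integrableOn
  have h₂ : -‖f‖ * μ.real (W \ U) ≤ ∫ x in W \ U, f x ∂μ :=
    setIntegral_ge_of_const_le_real (hW.diff hU) (measure_ne_top _ _)
      (fun x _ => neg_le_of_abs_le (f.norm_coe_le_norm x)) (f.integrable μ).integrableOn
  have h₃ := mul_le_mul_of_nonneg_right ha (measureReal_nonneg (μ := μ) (s := W \ U))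
  rw [← integral_inter_add_sdiff hU (f.integrable μ).integrableOn, ← hsplit]
  linarith

end SetAverage

section SupMass

variable {X : Type*} [MeasurableSpace X]

def supMass (μ : ℕ → Measure X) (V : Set X) : ℝ := ⨆ n, (μ n).real V

variable {μ : ℕ → Measure X}

lemma supMass_nonneg (V : Set X) : 0 ≤ supMass μ V :=
  Real.iSup_nonneg fun _ => measureReal_nonneg

lemma measureReal_le_supMass [∀ n, IsFiniteMeasure (μ n)] {M : ℝ}
    (hM : ∀ n, (μ n).real univ ≤ M) (n : ℕ) (V : Set X) : (μ n).real V ≤ supMass μ V :=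
  le_ciSup ⟨M, by rintro _ ⟨m, rfl⟩; exact (measureReal_mono (subset_univ V)).trans (hM m)⟩ n

variable [TopologicalSpace X]

def IsMassStable (μ : ℕ → Measure X) (δ : ℝ) (W : Set X) : Prop :=
  IsOpen W ∧ W.Nonempty ∧ ∀ V ⊆ W, IsOpen V → V.Nonempty → supMass μ W ≤ supMass μ V + δ

lemma exists_isMassStable_subset {δ : ℝ} (hδ : 0 < δ) {U : Set X} (hU : IsOpen U)
    (hU' : U.Nonempty) : ∃ W ⊆ U, IsMassStable μ δ W := by
  set 𝒱 := {V | IsOpen V ∧ V.Nonempty ∧ V ⊆ U}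
  have hbdd : BddBelow (supMass μ '' 𝒱) := ⟨0, by rintro _ ⟨V, -, rfl⟩; exact supMass_nonneg V⟩
  obtain ⟨_, ⟨W, ⟨hW, hW', hWU⟩, rfl⟩, hlt⟩ := exists_lt_of_csInf_lt
    (Set.Nonempty.image (supMass μ) (⟨U, hU, hU', subset_rfl⟩ : 𝒱.Nonempty))
    (lt_add_of_pos_right (sInf (supMass μ '' 𝒱)) hδ)
  refine ⟨W, hWU, hW, hW', fun V hVW hV hV' => ?_⟩
  have := csInf_le hbdd ⟨V, ⟨hV, hV', hVW.trans hWU⟩, rfl⟩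
  linarith

variable [OpensMeasurableSpace X] [∀ n, IsFiniteMeasure (μ n)]

lemma countable_of_pairwiseDisjoint_of_supMass_pos {D : Set (Set X)} (hD : D.PairwiseDisjoint id)
    (hDopen : ∀ W ∈ D, IsOpen W) (hDpos : ∀ W ∈ D, 0 < supMass μ W) : D.Countable := by
  have hcover : D ⊆ ⋃ n, Subtype.val '' {W : D | 0 < μ n W} := by
    intro W hW
    obtain ⟨n, hn⟩ := exists_lt_of_lt_ciSup (hDpos W hW)
    exact mem_iUnion.2 ⟨n, ⟨W, hW⟩, (ENNReal.toReal_pos_iff.1 hn).1, rfl⟩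
  refine Countable.mono hcover (countable_iUnion fun n => Countable.image ?_ _)
  exact Measure.countable_meas_pos_of_disjoint_iUnion (fun W => (hDopen W W.2).measurableSet)
    fun W V hWV => hD W.2 V.2 (Subtype.coe_ne_coe.2 hWV)

lemma exists_countable_isMassStable_cover (hpos : ∀ V, IsOpen V → V.Nonempty → 0 < supMass μ V)
    {δ : ℝ} (hδ : 0 < δ) :
    ∃ D : Set (Set X), D.Countable ∧ (∀ W ∈ D, IsMassStable μ δ W) ∧
      ∀ U, IsOpen U → U.Nonempty → ∃ W ∈ D, (U ∩ W).Nonempty := by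
  obtain ⟨D, hDstab, hDdisj, hDdense⟩ := exists_pairwiseDisjoint_forall_inter_nonempty
    fun U hU hU' => (exists_isMassStable_subset (μ := μ) hδ hU hU').imp
      fun W ⟨hWU, hW⟩ => ⟨hWU, hW.2.1, hW⟩
  refine ⟨D, countable_of_pairwiseDisjoint_of_supMass_pos hDdisj (fun W hW => (hDstab W hW).1)
    fun W hW => hpos W (hDstab W hW).1 (hDstab W hW).2.1, hDstab, hDdense⟩

variable {M : ℝ} (hM : ∀ n, (μ n).real univ ≤ M)
include hM

lemma IsMassStable.exists_measureReal_sdiff_lt {δ : ℝ} (hδ : 0 < δ) {W U : Set X}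
    (hW : IsMassStable μ δ W) (hU : IsOpen U) (hWU : (W ∩ U).Nonempty) :
    ∃ n, supMass μ W - 2 * δ < (μ n).real W ∧ (μ n).real (W \ U) < 2 * δ := by
  have hstab := hW.2.2 (W ∩ U) inter_subset_left (hW.1.inter hU) hWU
  obtain ⟨n, hn⟩ := exists_lt_of_lt_ciSup (sub_lt_self (supMass μ (W ∩ U)) hδ)
  have hle := measureReal_le_supMass hM n W
  have hmono : (μ n).real (W ∩ U) ≤ (μ n).real W := measureReal_mono inter_subset_left
  have hsplit := measureReal_inter_add_sdiff (μ := μ n) (s := W) hU.measurableSet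
  exact ⟨n, by linarith, by linarith⟩

lemma IsMassStable.exists_le_setAverage [CompactSpace X] {c ε : ℝ} (hc : 0 < c) (hε : 0 < ε)
    (hε₁ : ε ≤ 1) {W : Set X} (hW : IsMassStable μ (ε * c / 4) W) (hcW : c ≤ supMass μ W)
    {f : C(X, ℝ)} (hWf : (W ∩ {x | (1 - ε) * ‖f‖ < f x}).Nonempty) :
    ∃ n, (1 - 3 * ε) * ‖f‖ ≤ ⨍ x in W, f x ∂μ n := by
  obtain ⟨n, hWn, hUn⟩ := hW.exists_measureReal_sdiff_lt hM (by nlinarith)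
    (isOpen_lt continuous_const f.continuous) hWf
  have hint := le_setIntegral_of_le_norm (μ n) hW.1.measurableSet (f := f) (a := (1 - ε) * ‖f‖)
    (by nlinarith [norm_nonneg f])
  have hm : c / 2 ≤ (μ n).real W := by nlinarith
  have hd : (μ n).real (W \ {x | (1 - ε) * ‖f‖ < f x}) ≤ ε * (μ n).real W := by nlinarith
  refine ⟨n, ?_⟩
  rw [setAverage_eq, smul_eq_mul, le_inv_mul_iff₀ (by linarith)]
  nlinarith [mul_le_mul_of_nonneg_left hd (norm_nonneg f)]

lemma exists_le_setAverage_of_apply_eq_norm [CompactSpace X] {c ε : ℝ} (hc : 0 < c)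
    (hcV : ∀ V, IsOpen V → V.Nonempty → c ≤ supMass μ V) (hε : 0 < ε) (hε₁ : ε ≤ 1)
    {D : Set (Set X)} (hDstab : ∀ W ∈ D, IsMassStable μ (ε * c / 4) W)
    (hDdense : ∀ U, IsOpen U → U.Nonempty → ∃ W ∈ D, (U ∩ W).Nonempty) {f : C(X, ℝ)} {x₀ : X}
    (hx₀ : f x₀ = ‖f‖) (hf : 0 < ‖f‖) :
    ∃ W ∈ D, ∃ n, (1 - 3 * ε) * ‖f‖ ≤ ⨍ x in W, f x ∂μ n := by
  obtain ⟨W, hWD, hUW⟩ := hDdense {x | (1 - ε) * ‖f‖ < f x}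
    (isOpen_lt continuous_const f.continuous) ⟨x₀, by rw [mem_ofPred_eq, hx₀]; nlinarith⟩
  have hW := hDstab W hWD
  exact ⟨W, hWD, hW.exists_le_setAverage hM hc hε hε₁ (hcV W hW.1 hW.2.1) (by rwa [inter_comm])⟩

theorem exists_countable_norming_set [CompactSpace X] {c : ℝ} (hc : 0 < c)
    (hcV : ∀ V, IsOpen V → V.Nonempty → c ≤ supMass μ V) :
    ∃ S : Set (StrongDual ℝ C(X, ℝ)), S.Countable ∧ (∀ ψ ∈ S, ‖ψ‖ ≤ 1) ∧
      ∀ f, ∀ r < ‖f‖, ∃ ψ ∈ S, r < |ψ f| := by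
  set ε : ℕ → ℝ := fun k => 1 / (k + 1)
  have hε (k : ℕ) : 0 < ε k := Nat.one_div_pos_of_nat
  have hε₁ (k : ℕ) : ε k ≤ 1 := div_le_one_of_le₀ (by simp) (by positivity)
  choose D hDcount hDstab hDdense using fun k =>
    exists_countable_isMassStable_cover (fun V hV hV' => hc.trans_le (hcV V hV hV'))
      (δ := ε k * c / 4) (by have := hε k; positivity)
  refine ⟨insert 0 (⋃ k, ⋃ n, setAverageCLM (μ n) '' D k),
    (countable_iUnion fun k => countable_iUnion fun n => (hDcount k).image _).insert 0, ?_, ?_⟩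
  · rintro ψ (rfl | hψ)
    · exact ContinuousLinearMap.opNorm_zero.trans_le zero_le_one
    · obtain ⟨k, n, W, -, rfl⟩ := by simpa using hψ
      exact norm_setAverageCLM_le _ _
  intro f r hr
  rcases lt_or_ge r 0 with hr₀ | hr₀
  · exact ⟨0, mem_insert 0 _, by simpa using hr₀⟩
  have hf : 0 < ‖f‖ := hr₀.trans_lt hr
  have : Nonempty X := by
    by_contra! hX
    exact hf.ne' (by simp [Subsingleton.elim f 0])
  obtain ⟨g, hg, x₀, hx₀⟩ := f.exists_mem_pair_apply_eq_norm
  have hgf : ‖g‖ = ‖f‖ := by rcases hg with rfl | rfl <;> simp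
  have habs (ψ : StrongDual ℝ C(X, ℝ)) : |ψ g| = |ψ f| := by rcases hg with rfl | rfl <;> simp
  obtain ⟨k, hk⟩ := exists_nat_one_div_lt (show 0 < (‖f‖ - r) / (3 * ‖f‖) by
    apply div_pos <;> linarith)
  have hεf : 3 * ε k * ‖f‖ < ‖f‖ - r := by
    have := (lt_div_iff₀ (by positivity)).1 hk
    linarith
  obtain ⟨W, hWD, n, hn⟩ := exists_le_setAverage_of_apply_eq_norm hM hc hcV (hε k) (hε₁ k)
    (hDstab k) (hDdense k) (hx₀.trans hgf.symm) (hgf ▸ hf)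
  refine ⟨setAverageCLM (μ n) W, mem_insert_of_mem _ (mem_iUnion₂.2 ⟨k, n, W, hWD, rfl⟩), ?_⟩
  rw [hgf] at hn
  rw [← habs, setAverageCLM_apply]
  linarith [le_abs_self (⨍ x in W, g x ∂μ n)]

end SupMass

theorem exists_linearIsometry_of_countable_norming {E : Type*} [NormedAddCommGroup E]
    [NormedSpace ℝ E] {S : Set (StrongDual ℝ E)} (hS : S.Countable) (hS₁ : ∀ ψ ∈ S, ‖ψ‖ ≤ 1)
    (hnorming : ∀ x, ∀ r < ‖x‖, ∃ ψ ∈ S, r < |ψ x|) : Nonempty (E →ₗᵢ[ℝ] LinfNat) := by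
  obtain ⟨e, rfl⟩ := hS.exists_eq_range <|
    let ⟨ψ, hψ, _⟩ := hnorming 0 (-1) (by simp); ⟨ψ, hψ⟩
  have hle (x : E) (i : ℕ) : ‖e i x‖ ≤ ‖x‖ := by
    simpa using (e i).le_of_opNorm_le (hS₁ _ (mem_range_self i)) x
  have hbdd (x : E) : BddAbove (range fun i => ‖e i x‖) :=
    ⟨‖x‖, by rintro _ ⟨i, rfl⟩; exact hle x i⟩
  let J : E →ₗ[ℝ] LinfNat :=
    { toFun x := ⟨fun i => e i x, memℓp_infty (hbdd x)⟩
      map_add' x y := lp.ext <| funext fun i => map_add (e i) x y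
      map_smul' c x := lp.ext <| funext fun i => map_smul (e i) c x }
  refine ⟨⟨J, fun x => ?_⟩⟩
  rw [lp.norm_eq_ciSup]
  refine le_antisymm (ciSup_le (hle x)) (le_of_forall_lt fun r hr => ?_)
  obtain ⟨_, ⟨i, rfl⟩, hi⟩ := hnorming x r hr
  exact (lt_ciSup_iff (hbdd x)).2 ⟨i, hi⟩

lemma le_supMass_of_mul_norm_le {X : Type*} [TopologicalSpace X] [CompactSpace X] [T2Space X]
    [MeasurableSpace X] [OpensMeasurableSpace X] {μ : ℕ → Measure X} [∀ n, IsFiniteMeasure (μ n)]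
    {M : ℝ} (hM : ∀ n, (μ n).real univ ≤ M) (T : C(X, ℝ) →L[ℝ] LinfNat)
    (hTμ : ∀ n f, |T f n| ≤ ∫ x, |f x| ∂μ n) {c : ℝ} (hc : ∀ f, c * ‖f‖ ≤ ‖T f‖) {V : Set X}
    (hV : IsOpen V) (hV' : V.Nonempty) : c ≤ supMass μ V := by
  obtain ⟨x₀, hx₀⟩ := hV'
  obtain ⟨f, hfV, hfx₀, hf01⟩ := exists_continuous_zero_one_of_isClosed hV.isClosed_compl
    isClosed_singleton (disjoint_singleton_right.2 (not_not.2 hx₀))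
  have hf : ‖f‖ = 1 := le_antisymm ((f.norm_le zero_le_one).2 fun x => by
      rw [Real.norm_eq_abs, abs_le]; constructor <;> linarith [(hf01 x).1, (hf01 x).2])
    (by simpa [hfx₀ rfl] using f.norm_coe_le_norm x₀)
  have hfV' (n : ℕ) : ∫ x, |f x| ∂μ n ≤ (μ n).real V := by
    rw [← integral_indicator_one hV.measurableSet]
    refine integral_mono (f.integrable _).abs ((integrable_const 1).indicator hV.measurableSet)
      fun x => ?_
    by_cases hx : x ∈ V
    · simpa [hx, abs_le] using ⟨by linarith [(hf01 x).1], (hf01 x).2⟩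
    · simp [hx, hfV hx]
  have hTf : ‖T f‖ ≤ supMass μ V := by
    rw [lp.norm_eq_ciSup]
    exact ciSup_le fun n => ((hTμ n f).trans (hfV' n)).trans (measureReal_le_supMass hM n V)
  simpa [hf] using (hc f).trans hTf

/-- Talagrand: `C(K)` embeds isomorphically into `ℓ∞` iff it embeds isometrically. -/
theorem embeds_iff_embeds_isometrically (K : Type*) [TopologicalSpace K]
    [CompactSpace K] [T2Space K] :
    (∃ T : C(K, ℝ) →L[ℝ] LinfNat, Function.Injective T ∧ IsClosed (Set.range T)) ↔
      Nonempty (C(K, ℝ) →ₗᵢ[ℝ] LinfNat) := by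
  refine ⟨fun ⟨T, hTinj, hTrange⟩ => ?_, fun ⟨J⟩ =>
    ⟨J.toContinuousLinearMap, J.injective, J.isometry.isClosedEmbedding.isClosed_range⟩⟩
  borelize K
  obtain ⟨C, hC⟩ := T.antilipschitz_of_injective_of_isClosed_range hTinj hTrange
  have hlower (f : C(K, ℝ)) : ((C : ℝ) + 1)⁻¹ * ‖f‖ ≤ ‖T f‖ := by
    rw [inv_mul_le_iff₀ (by positivity)]
    nlinarith [T.bound_of_antilipschitz hC f, norm_nonneg (T f)]
  set φ : ℕ → StrongDual ℝ C(K, ℝ) := fun n => lp.evalCLM ℝ (fun _ : ℕ => ℝ) ⊤ n ∘L T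
  choose μ hμfin hμmass hμ using fun n => (φ n).exists_measure_abs_apply_le
  have hM (n : ℕ) : (μ n).real univ ≤ ‖T‖ :=
    (hμmass n).trans <| (φ n).opNorm_le_bound (norm_nonneg T) fun f =>
      (lp.norm_apply_le_norm ENNReal.top_ne_zero (T f) n).trans (T.le_opNorm f)
  obtain ⟨S, hS, hS₁, hnorming⟩ := exists_countable_norming_set hM
    (by positivity : 0 < ((C : ℝ) + 1)⁻¹) fun V hV hV' =>
      le_supMass_of_mul_norm_le hM T hμ hlower hV hV'
  exact exists_linearIsometry_of_countable_norming hS hS₁ hnorming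

end
end
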